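/- arXiv:2101.00517 — 7 statements merged into one kernel-verified Lean document; each statement's English description precedes it below -/
import Mathlib

section
/- For every initial value x₀ in the open positive orthant (0,∞)⁷ there exists a unique solution x of the COVID-19 system defined on all of [0,∞) with x(0) = x₀; moreover this solution satisfies x(t) ∈ (0,∞)⁷ for all t ≥ 0 and is bounded, namely N(t) ≤ Λ/μ + N(0) for all t ≥ 0. -/
/-!
Positivity and boundedness are a priori estimates. While a solution stays in the nonnegative
orthant, the total population `N` satisfies `N' ≤ Λ - μ N`, and on bounded sets every
compartment satisfies `xᵢ' ≥ -L xᵢ`; hence `N(t) ≤ Λ / μ + N(0)` and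
`xᵢ(t) ≥ xᵢ(0) e^{-L t} > 0`, and a first-exit-time argument shows that the solution never
leaves the positive orthant. The vector field is `C¹` near the resulting compact box, so
clamping the state into the box yields a globally Lipschitz, bounded field that agrees with it
there: Picard–Lindelöf gives a global solution of the clamped system, which by the a priori
estimates solves the original one, and uniqueness follows from the Lipschitz bound on the box.
-/

open scoped BigOperators

/-- The vector field of the deterministic SQEAIHR COVID-19 model.
State: `x = (S, Q, E, A, I, H, R)` indexed by `Fin 7`. -/
noncomputable def covidF (Λ b q lam μ σ εA γA dA εI γI dI γH dH θ p β₁ β₂ : ℝ)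
    (x : Fin 7 → ℝ) : Fin 7 → ℝ :=
  ![Λ - (β₁ - β₂ * x 4 / (b + x 4)) * x 0 * (x 4 + θ * x 3) + lam * x 1 - (μ + q) * x 0,
    q * x 0 - (μ + lam) * x 1,
    (β₁ - β₂ * x 4 / (b + x 4)) * x 0 * (x 4 + θ * x 3) - (μ + σ) * x 2,
    (1 - p) * σ * x 2 - (μ + εA + γA + dA) * x 3,
    σ * p * x 2 - (μ + εI + γI + dI) * x 4,
    εI * x 4 + εA * x 3 - (μ + dH + γH) * x 5,
    γH * x 5 + γI * x 4 + γA * x 3 - μ * x 6]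

/-- A solution of the system on `[0, ∞)`: a function differentiable (within `[0,∞)`) whose
derivative equals the vector field at every `t ≥ 0`. -/
def IsSolution (F : (Fin 7 → ℝ) → Fin 7 → ℝ) (x : ℝ → Fin 7 → ℝ) : Prop :=
  ∀ t : ℝ, 0 ≤ t → HasDerivWithinAt x (F (x t)) (Set.Ici (0 : ℝ)) t

open Set Real
open scoped NNReal Topology

section ODE

variable {E : Type*} [NormedAddCommGroup E] [NormedSpace ℝ E] {G : E → E} {K : ℝ≥0}

theorem eqOn_Icc_of_hasDerivWithinAt {s : Set E} (hG : LipschitzOnWith K G s) {f g : ℝ → E}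
    {a b : ℝ} (hf : ∀ t ∈ Icc a b, HasDerivWithinAt f (G (f t)) (Icc a b) t)
    (hfs : ∀ t ∈ Icc a b, f t ∈ s) (hg : ∀ t ∈ Icc a b, HasDerivWithinAt g (G (g t)) (Icc a b) t)
    (hgs : ∀ t ∈ Icc a b, g t ∈ s) (hfg : f a = g a) : EqOn f g (Icc a b) :=
  ODE_solution_unique_of_mem_Icc_right (v := fun _ ↦ G) (s := fun _ ↦ s) (fun _ _ ↦ hG)
    (fun t ht ↦ (hf t ht).continuousWithinAt)
    (fun t ht ↦ (hf t (Ico_subset_Icc_self ht)).mono_of_mem_nhdsWithin (Icc_mem_nhdsGE_of_mem ht))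
    (fun t ht ↦ hfs t (Ico_subset_Icc_self ht)) (fun t ht ↦ (hg t ht).continuousWithinAt)
    (fun t ht ↦ (hg t (Ico_subset_Icc_self ht)).mono_of_mem_nhdsWithin (Icc_mem_nhdsGE_of_mem ht))
    (fun t ht ↦ hgs t (Ico_subset_Icc_self ht)) hfg

variable [CompleteSpace E]

theorem exists_forall_hasDerivWithinAt_Icc (hG : LipschitzWith K G) {C : ℝ} (hC : ∀ x, ‖G x‖ ≤ C)
    (x₀ : E) (T : ℝ≥0) :
    ∃ f : ℝ → E, f 0 = x₀ ∧ ∀ t ∈ Icc 0 (T : ℝ), HasDerivWithinAt f (G (f t)) (Icc 0 (T : ℝ)) t :=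
  IsPicardLindelof.exists_eq_forall_mem_Icc_hasDerivWithinAt₀
    (t₀ := ⟨0, left_mem_Icc.2 T.2⟩) (a := C.toNNReal * T)
    (IsPicardLindelof.of_time_independent (fun x _ ↦ (hC x).trans (Real.le_coe_toNNReal C))
      hG.lipschitzOnWith (by simp))

theorem exists_forall_hasDerivWithinAt_Ici (hG : LipschitzWith K G) {C : ℝ} (hC : ∀ x, ‖G x‖ ≤ C)
    (x₀ : E) : ∃ f : ℝ → E, f 0 = x₀ ∧ ∀ t, 0 ≤ t → HasDerivWithinAt f (G (f t)) (Ici 0) t := by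
  choose sol hsol0 hsol using fun n : ℕ ↦ exists_forall_hasDerivWithinAt_Icc hG hC x₀ n
  simp only [NNReal.coe_natCast] at hsol
  have hagree {m n : ℕ} (hmn : m ≤ n) : EqOn (sol m) (sol n) (Icc 0 m) :=
    have hmn' : (m : ℝ) ≤ n := by exact_mod_cast hmn
    eqOn_Icc_of_hasDerivWithinAt hG.lipschitzOnWith (hsol m) (fun _ _ ↦ mem_univ _)
      (fun t ht ↦ (hsol n t ⟨ht.1, ht.2.trans hmn'⟩).mono (Icc_subset_Icc_right hmn'))
      (fun _ _ ↦ mem_univ _) ((hsol0 m).trans (hsol0 n).symm)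
  refine ⟨fun t ↦ sol (⌊t⌋₊ + 1) t, by simpa using hsol0 1, fun t ht ↦ ?_⟩
  -- near `t`, the glued function coincides with the single solution `sol n`
  set n := ⌊t⌋₊ + 1
  have htn : t < n := by simpa [n] using Nat.lt_floor_add_one t
  have hIcc : Icc 0 (n : ℝ) ∈ 𝓝[Ici 0] t := by
    rw [← Ici_inter_Iic]; exact inter_mem_nhdsWithin _ (Iic_mem_nhds htn)
  refine ((hsol n t ⟨ht, htn.le⟩).mono_of_mem_nhdsWithin hIcc).congr_of_eventuallyEq ?_ rfl
  filter_upwards [self_mem_nhdsWithin, nhdsWithin_le_nhds (Iio_mem_nhds htn)] with s hs hsn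
  exact hagree ((Nat.floor_lt hs).2 hsn) ⟨hs, by exact_mod_cast (Nat.lt_floor_add_one s).le⟩

end ODE

theorem LipschitzOnWith.exists_lipschitzWith_bounded_eqOn_Icc {ι E : Type*} [Fintype ι]
    [NormedAddCommGroup E] {F : (ι → ℝ) → E} {K : ℝ≥0} {l u : ι → ℝ} (hlu : l ≤ u)
    (hF : LipschitzOnWith K F (Icc l u)) :
    ∃ G : (ι → ℝ) → E, LipschitzWith K G ∧ (∃ C, ∀ x, ‖G x‖ ≤ C) ∧ EqOn G F (Icc l u) := by
  set proj : (ι → ℝ) → ι → ℝ := fun x i ↦ max (l i) (min (x i) (u i))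
  have hproj : LipschitzWith 1 proj := LipschitzWith.of_dist_le_mul fun x y ↦ by
    rw [NNReal.coe_one, one_mul, dist_pi_le_iff dist_nonneg]
    intro i
    simpa using (((LipschitzWith.eval i).min_const (u i)).const_max (l i)).dist_le_mul x y
  have hproj_mem (x) : proj x ∈ Icc l u :=
    ⟨fun i ↦ le_max_left _ _, fun i ↦ max_le (hlu i) (min_le_right _ _)⟩
  obtain ⟨C, hC⟩ := isCompact_Icc.exists_bound_of_continuousOn hF.continuousOn
  have hlip : LipschitzWith K (F ∘ proj) := by
    simpa using hF.comp hproj.lipschitzOnWith (s := univ) fun x _ ↦ hproj_mem x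
  refine ⟨F ∘ proj, hlip, ⟨C, fun x ↦ hC _ (hproj_mem x)⟩, fun x hx ↦ ?_⟩
  have : proj x = x := funext fun i ↦ by simp [proj, hx.1 i, hx.2 i]
  simp [this]

theorem mem_Icc_of_nonneg_of_sum_le {ι : Type*} [Fintype ι] {x : ι → ℝ} {m : ℝ} (hx : 0 ≤ x)
    (h : ∑ i, x i ≤ m) : x ∈ Icc 0 fun _ ↦ m :=
  ⟨hx, fun i ↦ (Finset.single_le_sum (fun j _ ↦ hx j) (Finset.mem_univ i)).trans h⟩

theorem ContinuousOn.mapsTo_Ici_of_mapsTo_Icc {X : Type*} [TopologicalSpace X] {f : ℝ → X}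
    {U V : Set X} {a : ℝ} (hf : ContinuousOn f (Ici a)) (hU : IsOpen U) (hV : IsClosed V)
    (hUV : U ⊆ V) (ha : f a ∈ U) (h : ∀ c, a < c → MapsTo f (Icc a c) V → f c ∈ U) :
    MapsTo f (Ici a) U := by
  intro t ht
  by_contra hft
  -- `τ` is the first time in `[a, t]` at which `f` leaves `U`
  set S := Icc a t ∩ f ⁻¹' Uᶜ
  have hS : IsClosed S := (hf.mono Icc_subset_Ici_self).preimage_isClosed_of_isClosed isClosed_Icc
    hU.isClosed_compl
  have hbdd : BddBelow S := ⟨a, fun s hs ↦ hs.1.1⟩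
  have hτ : sInf S ∈ S := hS.csInf_mem ⟨t, ⟨ht, le_rfl⟩, hft⟩ hbdd
  set τ := sInf S
  have haτ : a < τ := hτ.1.1.lt_of_ne fun h ↦ hτ.2 (h ▸ ha)
  have hbefore : MapsTo f (Ico a τ) V := fun s hs ↦ hUV <| by
    by_contra hfs
    exact (csInf_le hbdd ⟨⟨hs.1, hs.2.le.trans hτ.1.2⟩, hfs⟩).not_gt hs.2
  refine hτ.2 (h τ haτ fun s hs ↦ ?_)
  have hcont : ContinuousWithinAt f (Ico a τ) s :=
    (hf s hs.1).mono (Ico_subset_Icc_self.trans Icc_subset_Ici_self)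
  rw [← closure_Ico haτ.ne] at hs
  exact closure_minimal hbefore.image_subset hV (hcont.mem_closure_image hs)

theorem mul_exp_le_of_hasDerivWithinAt {g g' : ℝ → ℝ} {L a c : ℝ} (hac : a ≤ c)
    (hg : ∀ s ∈ Icc a c, HasDerivWithinAt g (g' s) (Icc a c) s)
    (hg' : ∀ s ∈ Ioo a c, -(L * g s) ≤ g' s) : g a * exp (-(L * (c - a))) ≤ g c := by
  have hexp (s : ℝ) : HasDerivAt (fun s ↦ exp (L * s)) (exp (L * s) * L) s := by
    simpa using ((hasDerivAt_id s).const_mul L).exp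
  have hmono : MonotoneOn (fun s ↦ g s * exp (L * s)) (Icc a c) := by
    refine monotoneOn_of_hasDerivWithinAt_nonneg (convex_Icc a c)
      (f' := fun s ↦ g' s * exp (L * s) + g s * (exp (L * s) * L))
      (fun s hs ↦ (hg s hs).continuousWithinAt.mul (hexp s).continuousAt.continuousWithinAt)
      (fun s hs ↦ ?_) (fun s hs ↦ ?_)
    · rw [interior_Icc] at hs ⊢
      exact ((hg s (Ioo_subset_Icc_self hs)).mono Ioo_subset_Icc_self).mul (hexp s).hasDerivWithinAt
    · rw [interior_Icc] at hs
      nlinarith [hg' s hs, exp_pos (L * s)]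
  calc g a * exp (-(L * (c - a))) = g a * exp (L * a) * exp (-(L * c)) := by
        rw [mul_assoc, ← exp_add]; ring_nf
    _ ≤ g c * exp (L * c) * exp (-(L * c)) :=
        mul_le_mul_of_nonneg_right (hmono (left_mem_Icc.2 hac) (right_mem_Icc.2 hac) hac)
          (exp_pos _).le
    _ = g c := by rw [mul_assoc, ← exp_add, add_neg_cancel, exp_zero, mul_one]

section Covid

variable {Λ b q lam μ σ εA γA dA εI γI dI γH dH θ p β₁ β₂ : ℝ}

theorem covidF_contDiffOn {n : WithTop ℕ∞} :
    ContDiffOn ℝ n (covidF Λ b q lam μ σ εA γA dA εI γI dI γH dH θ p β₁ β₂) {x | b + x 4 ≠ 0} := by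
  refine contDiffOn_pi.2 fun i ↦ ?_
  fin_cases i <;>
    simp only [covidF, Fin.zero_eta, Fin.mk_one, Fin.reduceFinMk, Matrix.cons_val_zero,
      Matrix.cons_val_one, Matrix.cons_val] <;>
    fun_prop (disch := exact fun _ h ↦ h)

theorem sum_covidF (x : Fin 7 → ℝ) :
    ∑ i, covidF Λ b q lam μ σ εA γA dA εI γI dI γH dH θ p β₁ β₂ x i =
      Λ - μ * ∑ i, x i - (dA * x 3 + dI * x 4 + dH * x 5) := by
  simp only [covidF, Fin.sum_univ_seven, Matrix.cons_val]
  ring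

theorem incidence_mem_Icc (hb : 0 < b) (hθ : 0 ≤ θ) (hβ₂ : 0 ≤ β₂) (hβ : β₂ ≤ β₁) {m : ℝ}
    {x : Fin 7 → ℝ} (hx : x ∈ Icc 0 fun _ ↦ m) :
    (β₁ - β₂ * x 4 / (b + x 4)) * x 0 * (x 4 + θ * x 3) ∈ Icc 0 (β₁ * ((1 + θ) * m) * x 0) := by
  have hx0 (j : Fin 7) : 0 ≤ x j := hx.1 j
  have hxm (j : Fin 7) : x j ≤ m := hx.2 j
  have hI : 0 < b + x 4 := by linarith [hx0 4]
  have hsat : β₂ * x 4 / (b + x 4) ≤ β₂ := by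
    rw [div_le_iff₀ hI]; linarith [mul_nonneg hβ₂ hb.le]
  have hforce : 0 ≤ β₁ - β₂ * x 4 / (b + x 4) := by linarith
  have hforce' : β₁ - β₂ * x 4 / (b + x 4) ≤ β₁ := by
    linarith [div_nonneg (mul_nonneg hβ₂ (hx0 4)) hI.le]
  have hcontact : 0 ≤ x 4 + θ * x 3 := by linarith [mul_nonneg hθ (hx0 3), hx0 4]
  have hcontact' : x 4 + θ * x 3 ≤ (1 + θ) * m := by
    linarith [mul_le_mul_of_nonneg_left (hxm 3) hθ, hxm 4]
  have := hx0 0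
  have := hβ₂.trans hβ
  refine ⟨by positivity, ?_⟩
  calc _ = (β₁ - β₂ * x 4 / (b + x 4)) * (x 4 + θ * x 3) * x 0 := by ring
    _ ≤ β₁ * ((1 + θ) * m) * x 0 := by gcongr

theorem exists_neg_mul_le_covidF (hΛ : 0 ≤ Λ) (hb : 0 < b) (hq : 0 ≤ q) (hlam : 0 ≤ lam)
    (hσ : 0 ≤ σ) (hεA : 0 ≤ εA) (hγA : 0 ≤ γA) (hεI : 0 ≤ εI) (hγI : 0 ≤ γI) (hγH : 0 ≤ γH)
    (hθ : 0 ≤ θ) (hp : p ∈ Icc (0 : ℝ) 1) (hβ₂ : 0 ≤ β₂) (hβ : β₂ ≤ β₁) (m : ℝ) (i : Fin 7) :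
    ∃ L, ∀ x ∈ Icc 0 fun _ ↦ m,
      -(L * x i) ≤ covidF Λ b q lam μ σ εA γA dA εI γI dI γH dH θ p β₁ β₂ x i := by
  fin_cases i
  · refine ⟨μ + q + β₁ * ((1 + θ) * m), fun x hx ↦ ?_⟩
    simp only [covidF, Fin.zero_eta, Matrix.cons_val_zero]
    linarith [(incidence_mem_Icc hb hθ hβ₂ hβ hx).2, mul_nonneg hlam (hx.1 1)]
  · refine ⟨μ + lam, fun x hx ↦ ?_⟩
    simp only [covidF, Fin.mk_one, Matrix.cons_val_one, Matrix.cons_val_zero]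
    linarith [mul_nonneg hq (hx.1 0)]
  · refine ⟨μ + σ, fun x hx ↦ ?_⟩
    simp only [covidF, Fin.reduceFinMk, Matrix.cons_val]
    linarith [(incidence_mem_Icc hb hθ hβ₂ hβ hx).1]
  · refine ⟨μ + εA + γA + dA, fun x hx ↦ ?_⟩
    simp only [covidF, Fin.reduceFinMk, Matrix.cons_val]
    linarith [mul_nonneg (mul_nonneg (sub_nonneg.2 hp.2) hσ) (hx.1 2)]
  · refine ⟨μ + εI + γI + dI, fun x hx ↦ ?_⟩
    simp only [covidF, Fin.reduceFinMk, Matrix.cons_val]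
    linarith [mul_nonneg (mul_nonneg hσ hp.1) (hx.1 2)]
  · refine ⟨μ + dH + γH, fun x hx ↦ ?_⟩
    simp only [covidF, Fin.reduceFinMk, Matrix.cons_val]
    linarith [mul_nonneg hεI (hx.1 4), mul_nonneg hεA (hx.1 3)]
  · refine ⟨μ, fun x hx ↦ ?_⟩
    simp only [covidF, Fin.reduceFinMk, Matrix.cons_val]
    linarith [mul_nonneg hγH (hx.1 5), mul_nonneg hγI (hx.1 4), mul_nonneg hγA (hx.1 3)]

theorem sum_le_of_hasDerivWithinAt_covidF (hΛ : 0 ≤ Λ) (hμ : 0 < μ) (hdA : 0 ≤ dA)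
    (hdI : 0 ≤ dI) (hdH : 0 ≤ dH) {y : ℝ → Fin 7 → ℝ} {a c : ℝ} (hac : a ≤ c)
    (hy : ∀ s ∈ Icc a c,
      HasDerivWithinAt y (covidF Λ b q lam μ σ εA γA dA εI γI dI γH dH θ p β₁ β₂ (y s)) (Icc a c) s)
    (hy₀ : ∀ s ∈ Icc a c, 0 ≤ y s) :
    ∑ i, y c i ≤ Λ / μ + ∑ i, y a i := by
  -- `Λ / μ - N` decays at rate at most `μ`, since `N' ≤ Λ - μ N`
  have hdecay := mul_exp_le_of_hasDerivWithinAt (L := μ) hac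
    (fun s hs ↦ (HasDerivWithinAt.fun_sum fun i _ ↦ hasDerivWithinAt_pi.1 (hy s hs) i).const_sub
      (Λ / μ))
    (fun s hs ↦ by
      have h := hy₀ s (Ioo_subset_Icc_self hs)
      rw [sum_covidF, mul_sub, mul_div_cancel₀ _ hμ.ne']
      linarith [mul_nonneg hdA (h 3), mul_nonneg hdI (h 4), mul_nonneg hdH (h 5)])
  have he := exp_pos (-(μ * (c - a)))
  have he₁ : exp (-(μ * (c - a))) ≤ 1 := exp_le_one_iff.2 <|
    neg_nonpos.2 (mul_nonneg hμ.le (sub_nonneg.2 hac))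
  have hNa : 0 ≤ ∑ i, y a i := Finset.sum_nonneg fun i _ ↦ hy₀ a (left_mem_Icc.2 hac) i
  linarith [mul_nonneg (div_nonneg hΛ hμ.le) he.le, mul_le_of_le_one_right hNa he₁]

theorem pos_of_hasDerivWithinAt_covidF (hΛ : 0 ≤ Λ) (hb : 0 < b) (hq : 0 ≤ q) (hlam : 0 ≤ lam)
    (hσ : 0 ≤ σ) (hεA : 0 ≤ εA) (hγA : 0 ≤ γA) (hεI : 0 ≤ εI) (hγI : 0 ≤ γI) (hγH : 0 ≤ γH)
    (hθ : 0 ≤ θ) (hp : p ∈ Icc (0 : ℝ) 1) (hβ₂ : 0 ≤ β₂) (hβ : β₂ ≤ β₁)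
    {y : ℝ → Fin 7 → ℝ} {a c m : ℝ} (hac : a ≤ c)
    (hy : ∀ s ∈ Icc a c,
      HasDerivWithinAt y (covidF Λ b q lam μ σ εA γA dA εI γI dI γH dH θ p β₁ β₂ (y s)) (Icc a c) s)
    (hym : ∀ s ∈ Icc a c, y s ∈ Icc 0 fun _ ↦ m) {i : Fin 7} (ha : 0 < y a i) : 0 < y c i := by
  obtain ⟨L, hL⟩ := exists_neg_mul_le_covidF (μ := μ) (dA := dA) (dI := dI) (dH := dH)
    hΛ hb hq hlam hσ hεA hγA hεI hγI hγH hθ hp hβ₂ hβ m i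
  exact (mul_pos ha (exp_pos _)).trans_le <| mul_exp_le_of_hasDerivWithinAt hac
    (fun s hs ↦ hasDerivWithinAt_pi.1 (hy s hs) i) fun s hs ↦ hL _ (hym s (Ioo_subset_Icc_self hs))

theorem pos_and_sum_le_of_hasDerivWithinAt_covidF (hΛ : 0 ≤ Λ) (hb : 0 < b) (hq : 0 ≤ q)
    (hlam : 0 ≤ lam) (hμ : 0 < μ) (hσ : 0 ≤ σ) (hεA : 0 ≤ εA) (hγA : 0 ≤ γA) (hdA : 0 ≤ dA)
    (hεI : 0 ≤ εI) (hγI : 0 ≤ γI) (hdI : 0 ≤ dI) (hγH : 0 ≤ γH) (hdH : 0 ≤ dH) (hθ : 0 ≤ θ)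
    (hp : p ∈ Icc (0 : ℝ) 1) (hβ₂ : 0 ≤ β₂) (hβ : β₂ ≤ β₁) {x₀ : Fin 7 → ℝ} (hx₀ : ∀ i, 0 < x₀ i)
    (y : ℝ → Fin 7 → ℝ) (hcont : ContinuousOn y (Ici 0)) (hy0 : y 0 = x₀)
    (hy : ∀ t, 0 ≤ t → y t ∈ (Icc 0 fun _ ↦ Λ / μ + ∑ i, x₀ i + 1) →
      HasDerivWithinAt y (covidF Λ b q lam μ σ εA γA dA εI γI dI γH dH θ p β₁ β₂ (y t)) (Ici 0) t) :
    ∀ t, 0 ≤ t → (∀ i, 0 < y t i) ∧ ∑ i, y t i ≤ Λ / μ + ∑ i, x₀ i := by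
  set M := Λ / μ + ∑ i, x₀ i
  set V : Set (Fin 7 → ℝ) := Ici 0 ∩ {x | ∑ i, x i ≤ M + 1}
  have hV (x) (hx : x ∈ V) : x ∈ Icc 0 fun _ ↦ M + 1 := mem_Icc_of_nonneg_of_sum_le hx.1 hx.2
  have key (c : ℝ) (hc : 0 ≤ c) (hyV : MapsTo y (Icc 0 c) V) :
      (∀ i, 0 < y c i) ∧ ∑ i, y c i ≤ M := by
    have hy' (s) (hs : s ∈ Icc 0 c) :
        HasDerivWithinAt y (covidF Λ b q lam μ σ εA γA dA εI γI dI γH dH θ p β₁ β₂ (y s))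
          (Icc 0 c) s :=
      (hy s hs.1 (hV _ (hyV hs))).mono Icc_subset_Ici_self
    refine ⟨fun i ↦ pos_of_hasDerivWithinAt_covidF hΛ hb hq hlam hσ hεA hγA hεI hγI hγH hθ hp hβ₂
      hβ hc hy' (fun s hs ↦ hV _ (hyV hs)) (hy0 ▸ hx₀ i), ?_⟩
    simpa only [hy0] using
      sum_le_of_hasDerivWithinAt_covidF hΛ hμ hdA hdI hdH hc hy' fun s hs ↦ (hyV hs).1
  set U : Set (Fin 7 → ℝ) := univ.pi (fun _ ↦ Ioi 0) ∩ {x | ∑ i, x i < M + 1}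
  have hUV : U ⊆ V := fun x hx ↦
    ⟨fun i ↦ (hx.1 i (mem_univ i)).le, mem_ofPred.2 (mem_ofPred.1 hx.2).le⟩
  have hyU : MapsTo y (Ici 0) U := by
    refine hcont.mapsTo_Ici_of_mapsTo_Icc
      ((isOpen_set_pi finite_univ fun _ _ ↦ isOpen_Ioi).inter
        (isOpen_lt (by fun_prop) (by fun_prop)))
      (isClosed_Ici.inter (isClosed_le (by fun_prop) (by fun_prop))) hUV ?_ fun c hc hyV ↦ ?_
    · have hM : ∑ i, x₀ i < M + 1 := by simp only [M]; linarith [div_nonneg hΛ hμ.le]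
      exact ⟨fun i _ ↦ hy0 ▸ hx₀ i, mem_ofPred.2 (hy0 ▸ hM)⟩
    · obtain ⟨hpos, hsum⟩ := key c hc.le hyV
      exact ⟨fun i _ ↦ hpos i, mem_ofPred.2 (by linarith)⟩
  exact fun t ht ↦ key t ht fun s hs ↦ hUV (hyU hs.1)

end Covid

/-- existence, uniqueness (on `[0,∞)`), positivity and boundedness
of the solution of the COVID-19 system for any initial value in the positive orthant. -/
theorem covid_existence_uniqueness_positivity_boundedness
    (Λ b q lam μ σ εA γA dA εI γI dI γH dH θ p β₁ β₂ : ℝ)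
    (hΛ : 0 < Λ) (hb : 0 < b) (hq : 0 < q) (hlam : 0 < lam) (hμ : 0 < μ)
    (hσ : 0 < σ) (hεA : 0 < εA) (hγA : 0 < γA) (hdA : 0 < dA)
    (hεI : 0 < εI) (hγI : 0 < γI) (hdI : 0 < dI) (hγH : 0 < γH) (hdH : 0 < dH)
    (hθ : θ ∈ Set.Ioo (0 : ℝ) 1) (hp : p ∈ Set.Ioo (0 : ℝ) 1)
    (hβ₂ : 0 < β₂) (hβ : β₂ ≤ β₁) :
    ∀ x₀ : Fin 7 → ℝ, (∀ i, 0 < x₀ i) →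
      ∃ x : ℝ → Fin 7 → ℝ,
        (IsSolution (covidF Λ b q lam μ σ εA γA dA εI γI dI γH dH θ p β₁ β₂) x ∧ x 0 = x₀ ∧
          (∀ t : ℝ, 0 ≤ t → ∀ i, 0 < x t i) ∧
          (∀ t : ℝ, 0 ≤ t → (∑ i, x t i) ≤ Λ / μ + ∑ i, x₀ i)) ∧
        (∀ y : ℝ → Fin 7 → ℝ, IsSolution (covidF Λ b q lam μ σ εA γA dA εI γI dI γH dH θ p β₁ β₂) y → y 0 = x₀ →
          ∀ t : ℝ, 0 ≤ t → y t = x t) := by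
  intro x₀ hx₀
  have hinv := pos_and_sum_le_of_hasDerivWithinAt_covidF hΛ.le hb hq.le hlam.le hμ hσ.le hεA.le
    hγA.le hdA.le hεI.le hγI.le hdI.le hγH.le hdH.le hθ.1.le (Ioo_subset_Icc_self hp) hβ₂.le hβ hx₀
  set B : Set (Fin 7 → ℝ) := Icc 0 fun _ ↦ Λ / μ + ∑ i, x₀ i + 1
  have hB {z : Fin 7 → ℝ} (hz : (∀ i, 0 < z i) ∧ ∑ i, z i ≤ Λ / μ + ∑ i, x₀ i) : z ∈ B :=
    mem_Icc_of_nonneg_of_sum_le (fun i ↦ (hz.1 i).le) (by linarith [hz.2])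
  obtain ⟨K, hK⟩ := (covidF_contDiffOn.mono fun z (hz : z ∈ B) ↦
      (add_pos_of_pos_of_nonneg hb (hz.1 4)).ne').exists_lipschitzOnWith one_ne_zero
    (convex_Icc _ _) isCompact_Icc
  obtain ⟨G, hG, ⟨C, hC⟩, hGF⟩ := hK.exists_lipschitzWith_bounded_eqOn_Icc fun _ ↦ by
    have := div_nonneg hΛ.le hμ.le
    have := Finset.sum_nonneg fun i (_ : i ∈ Finset.univ) ↦ (hx₀ i).le
    positivity
  obtain ⟨x, hx0, hx⟩ := exists_forall_hasDerivWithinAt_Ici hG hC x₀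
  have hxinv := hinv x (fun t ht ↦ (hx t ht).continuousWithinAt) hx0 fun t ht hxt ↦
    hGF hxt ▸ hx t ht
  have hxF : IsSolution (covidF Λ b q lam μ σ εA γA dA εI γI dI γH dH θ p β₁ β₂) x :=
    fun t ht ↦ hGF (hB (hxinv t ht)) ▸ hx t ht
  refine ⟨x, ⟨hxF, hx0, fun t ht ↦ (hxinv t ht).1, fun t ht ↦ (hxinv t ht).2⟩,
    fun y hy hy0 t ht ↦ ?_⟩
  have hyinv := hinv y (fun t ht ↦ (hy t ht).continuousWithinAt) hy0 fun t ht _ ↦ hy t ht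
  exact eqOn_Icc_of_hasDerivWithinAt hK (fun s hs ↦ (hy s hs.1).mono Icc_subset_Ici_self)
    (fun s hs ↦ hB (hyinv s hs.1)) (fun s hs ↦ (hxF s hs.1).mono Icc_subset_Ici_self)
    (fun s hs ↦ hB (hxinv s hs.1)) (hy0.trans hx0.symm) ⟨ht, le_rfl⟩
end

section
/- The region 𝒮 = { x = (S,Q,E,A,I,H,R) in the nonnegative orthant of ℝ⁷ : S ≤ S° and Q ≤ Q° } is positively invariant for the COVID-19 system: every solution x with x(0) ∈ 𝒮 satisfies x(t) ∈ 𝒮 for all t ≥ 0. -/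
/-!
The region is the coordinate box `[0, S°] × [0, Q°] × [0, ∞)⁵`. The vector field is locally
Lipschitz near it (its only singularity, `I = -b`, lies outside) and points into it on every
face: on the faces `xᵢ = 0` every inflow is nonnegative, and on `S = S°`, `Q = Q°` because
`(S°, Q°)` is the equilibrium of the infection-free `S`–`Q` subsystem while infection only
removes susceptibles. For such a box, let `v` be the sum of the squared negative parts of the
gaps `xᵢ - loᵢ`, `hiᵢ - xᵢ`. Comparing `F x` with `F` at the clamp of `x` onto the box, where
the inward condition applies, bounds `v'` by a multiple of `v` near any point of the box, so by
Grönwall `v` stays `0`.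
-/

open scoped BigOperators

open Set Filter Topology

theorem hasDerivAt_negPart_sq (a : ℝ) : HasDerivAt (fun y : ℝ => y⁻ ^ 2) (-2 * a⁻) a := by
  rcases lt_trichotomy a 0 with ha | rfl | ha
  · have h : (fun y : ℝ => y⁻ ^ 2) =ᶠ[𝓝 a] fun y => y ^ 2 := by
      filter_upwards [Iio_mem_nhds ha] with y hy
      rw [negPart_eq_neg.2 hy.le, neg_sq]
    rw [negPart_eq_neg.2 ha.le]
    simpa using (hasDerivAt_pow 2 a).congr_of_eventuallyEq h
  · have hslope : slope (fun y : ℝ => y⁻ ^ 2) 0 = fun y => -y⁻ := by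
      ext y
      rcases lt_or_ge y 0 with hy | hy
      · rw [slope_def_field, negPart_eq_neg.2 hy.le]
        field_simp [hy.ne]
        simp [sq]
      · simp [slope_def_field, negPart_eq_zero.2 hy]
    have hcont : Continuous fun y : ℝ => -y⁻ := continuous_negPart.neg
    rw [hasDerivAt_iff_tendsto_slope, hslope]
    simpa using (hcont.tendsto 0).mono_left nhdsWithin_le_nhds
  · have h : (fun y : ℝ => y⁻ ^ 2) =ᶠ[𝓝 a] fun _ => 0 := by
      filter_upwards [Ioi_mem_nhds ha] with y hy
      rw [negPart_eq_zero.2 hy.le, zero_pow two_ne_zero]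
    rw [negPart_eq_zero.2 ha.le, mul_zero]
    exact (hasDerivAt_const a 0).congr_of_eventuallyEq h

theorem negPart_mul_neg_le {y y' c : ℝ} (h : y < 0 → -y' ≤ c) : y⁻ * -y' ≤ y⁻ * c := by
  rcases lt_or_ge y 0 with hy | hy
  · exact mul_le_mul_of_nonneg_left (h hy) (negPart_nonneg y)
  · simp [negPart_eq_zero.2 hy]

theorem nonneg_of_neg_deriv_le_sum_negPart {κ : Type*} [Fintype κ] {g g' : κ → ℝ → ℝ}
    {C a b : ℝ} (hC : 0 ≤ C) (hg : ∀ k, ContinuousOn (g k) (Icc a b))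
    (hg' : ∀ k, ∀ t ∈ Ico a b, HasDerivWithinAt (g k) (g' k t) (Ici t) t)
    (ha : ∀ k, 0 ≤ g k a)
    (bound : ∀ t ∈ Ico a b, ∀ k, g k t < 0 → -g' k t ≤ C * ∑ j, (g j t)⁻) :
    ∀ t ∈ Icc a b, ∀ k, 0 ≤ g k t := by
  set v : ℝ → ℝ := fun t => ∑ k, (g k t)⁻ ^ 2
  have hv : ContinuousOn v (Icc a b) :=
    continuousOn_finsetSum _ fun k _ => (continuous_negPart.comp_continuousOn (hg k)).pow 2
  have hv' : ∀ t ∈ Ico a b, HasDerivWithinAt v (∑ k, -2 * (g k t)⁻ * g' k t) (Ici t) t :=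
    fun t ht => HasDerivWithinAt.fun_sum fun k _ =>
      (hasDerivAt_negPart_sq (g k t)).comp_hasDerivWithinAt t (hg' k t ht)
  have hbound : ∀ t ∈ Ico a b, ∑ k, -2 * (g k t)⁻ * g' k t ≤ 2 * C * Fintype.card κ * v t := by
    intro t ht
    set N := ∑ j, (g j t)⁻
    calc ∑ k, -2 * (g k t)⁻ * g' k t = 2 * ∑ k, (g k t)⁻ * -g' k t := by
          rw [Finset.mul_sum]; congr 1; ext k; ring
      _ ≤ 2 * ∑ k, (g k t)⁻ * (C * N) := by
          gcongr 2 * ?_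
          exact Finset.sum_le_sum fun k _ => negPart_mul_neg_le (bound t ht k)
      _ = 2 * C * N ^ 2 := by rw [← Finset.sum_mul]; ring
      _ ≤ 2 * C * (Fintype.card κ * v t) := by
          gcongr; exact sq_sum_le_card_mul_sum_sq
      _ = 2 * C * Fintype.card κ * v t := by ring
  have hva : v a = 0 := Finset.sum_eq_zero fun k _ => by simp [negPart_eq_zero.2 (ha k)]
  intro t ht k
  have hvt : v t ≤ 0 := by
    simpa [gronwallBound_ε0_δ0] using le_gronwallBound_of_liminf_deriv_right_le hv
      (fun t ht _ hr => (hv' t ht).liminf_right_slope_le hr) hva.le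
      (fun t ht => (hbound t ht).trans_eq (add_zero _).symm) t ht
  have hk : (g k t)⁻ ^ 2 = 0 :=
    (Finset.sum_eq_zero_iff_of_nonneg fun j _ => sq_nonneg _).1
      (le_antisymm hvt (Finset.sum_nonneg fun j _ => sq_nonneg _)) k (Finset.mem_univ k)
  exact negPart_eq_zero.1 (pow_eq_zero_iff two_ne_zero |>.1 hk)

section CoordBox

variable {ι : Type*} (lo : ι → ℝ) (s : Finset ι) (hi : ι → ℝ)

-- Only the coordinates in `s` are bounded above; `hi i` plays no role for `i ∉ s`.
def coordBox : Set (ι → ℝ) := {z | ∀ i, lo i ≤ z i ∧ (i ∈ s → z i ≤ hi i)}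

def boxGap : ι ⊕ s → (ι → ℝ) → ℝ
  | .inl i, z => z i - lo i
  | .inr i, z => hi i - z i

def boxGapLin : ι ⊕ s → (ι → ℝ) → ℝ
  | .inl i, v => v i
  | .inr i, v => -v i

open Classical in
noncomputable def boxClamp (z : ι → ℝ) : ι → ℝ :=
  fun i => if i ∈ s then max (lo i) (min (z i) (hi i)) else max (lo i) (z i)

variable {lo s hi}

theorem mem_coordBox_iff_boxGap_nonneg {z : ι → ℝ} :
    z ∈ coordBox lo s hi ↔ ∀ k, 0 ≤ boxGap lo s hi k z := by
  simp only [coordBox, Sum.forall, boxGap, sub_nonneg, Subtype.forall]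
  exact ⟨fun h => ⟨fun i => (h i).1, fun i his => (h i).2 his⟩, fun h i => ⟨h.1 i, h.2 i⟩⟩

theorem continuous_boxGap (k : ι ⊕ s) : Continuous (boxGap lo s hi k) := by
  cases k with
  | inl i => exact (continuous_apply i).sub continuous_const
  | inr i => exact continuous_const.sub (continuous_apply (i : ι))

theorem isClosed_coordBox : IsClosed (coordBox lo s hi) := by
  have h : coordBox lo s hi = ⋂ k, boxGap lo s hi k ⁻¹' Ici 0 := by
    ext z; simp [mem_coordBox_iff_boxGap_nonneg]
  rw [h]
  exact isClosed_iInter fun k => isClosed_Ici.preimage (continuous_boxGap k)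

theorem HasDerivWithinAt.boxGap {x : ℝ → ι → ℝ} {x' : ι → ℝ} {S : Set ℝ} {t : ℝ}
    [Fintype ι] (hx : HasDerivWithinAt x x' S t) (k : ι ⊕ s) :
    HasDerivWithinAt (fun t => boxGap lo s hi k (x t)) (boxGapLin s k x') S t := by
  cases k with
  | inl i => exact (hasDerivWithinAt_pi.1 hx i).sub_const _
  | inr i => exact (hasDerivWithinAt_pi.1 hx i).const_sub _

theorem boxClamp_mem (hlh : ∀ i ∈ s, lo i ≤ hi i) (z : ι → ℝ) :
    boxClamp lo s hi z ∈ coordBox lo s hi := by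
  intro i
  by_cases hs : i ∈ s <;> simp only [boxClamp, hs, if_true, if_false] <;> grind

theorem boxClamp_apply_of_lt (hlh : ∀ i ∈ s, lo i ≤ hi i) {z : ι → ℝ} {i : ι}
    (hz : z i < lo i) : boxClamp lo s hi z i = lo i := by
  by_cases hs : i ∈ s <;> simp only [boxClamp, hs, if_true, if_false] <;> grind

theorem boxClamp_apply_of_gt (hlh : ∀ i ∈ s, lo i ≤ hi i) {z : ι → ℝ} {i : ι} (hs : i ∈ s)
    (hz : hi i < z i) : boxClamp lo s hi z i = hi i := by
  have := hlh i hs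
  simp only [boxClamp, hs, if_true]; grind

theorem dist_boxClamp_le [Fintype ι] {w : ι → ℝ} (hw : w ∈ coordBox lo s hi) (z : ι → ℝ) :
    dist (boxClamp lo s hi z) w ≤ dist z w := by
  refine dist_pi_le_iff dist_nonneg |>.2 fun i => ?_
  refine le_trans ?_ (dist_le_pi_dist z w i)
  simp only [Real.dist_eq]
  have := hw i
  by_cases hs : i ∈ s <;> simp only [boxClamp, hs, if_true, if_false] <;> grind

theorem norm_sub_boxClamp_le [Fintype ι] (hlh : ∀ i ∈ s, lo i ≤ hi i) (z : ι → ℝ) :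
    ‖z - boxClamp lo s hi z‖ ≤ ∑ k, (boxGap lo s hi k z)⁻ := by
  have hsum : ∀ k, (boxGap lo s hi k z)⁻ ≤ ∑ k, (boxGap lo s hi k z)⁻ := fun k =>
    Finset.single_le_sum (f := fun k => (boxGap lo s hi k z)⁻) (fun j _ => negPart_nonneg _)
      (Finset.mem_univ k)
  refine (pi_norm_le_iff_of_nonneg (Finset.sum_nonneg fun j _ => negPart_nonneg _)).2 fun i => ?_
  rw [Pi.sub_apply, Real.norm_eq_abs]
  by_cases hs : i ∈ s
  · have h1 := hsum (.inl i)
    have h2 := hsum (.inr ⟨i, hs⟩)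
    have := hlh i hs
    simp only [boxClamp, hs, if_true, boxGap] at h1 h2 ⊢
    grind [negPart_def]
  · have h1 := hsum (.inl i)
    simp only [boxClamp, hs, if_false, boxGap] at h1 ⊢
    grind [negPart_def]

end CoordBox

section Invariance

variable {ι : Type*} [Fintype ι] {lo : ι → ℝ} {s : Finset ι} {hi : ι → ℝ}
  {F : (ι → ℝ) → ι → ℝ}

theorem neg_boxGapLin_le_of_lipschitzOnWith {L : NNReal} {U : Set (ι → ℝ)}
    (hF : LipschitzOnWith L F U)
    (hlo : ∀ z ∈ coordBox lo s hi, ∀ i, z i = lo i → 0 ≤ F z i)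
    (hhi : ∀ z ∈ coordBox lo s hi, ∀ i ∈ s, z i = hi i → F z i ≤ 0)
    (hlh : ∀ i ∈ s, lo i ≤ hi i) {z : ι → ℝ} (hz : z ∈ U) (hpz : boxClamp lo s hi z ∈ U)
    (k : ι ⊕ s) (hk : boxGap lo s hi k z < 0) :
    -boxGapLin s k (F z) ≤ L * ∑ j, (boxGap lo s hi j z)⁻ := by
  set p := boxClamp lo s hi z
  have hp : p ∈ coordBox lo s hi := boxClamp_mem hlh z
  have hFp : ∀ i, |F z i - F p i| ≤ L * ∑ j, (boxGap lo s hi j z)⁻ := fun i =>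
    calc |F z i - F p i| ≤ dist (F z) (F p) := dist_le_pi_dist (F z) (F p) i
      _ ≤ L * dist z p := hF.dist_le_mul z hz p hpz
      _ ≤ L * ∑ j, (boxGap lo s hi j z)⁻ := by
        gcongr; exact (dist_eq_norm z p).trans_le (norm_sub_boxClamp_le hlh z)
  cases k with
  | inl i =>
    have hpi : p i = lo i := boxClamp_apply_of_lt hlh (sub_neg.1 hk)
    have := hlo p hp i hpi
    have := abs_le.1 (hFp i)
    simp only [boxGapLin]
    linarith
  | inr i =>
    have hpi : p i = hi i := boxClamp_apply_of_gt hlh i.2 (sub_neg.1 hk)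
    have := hhi p hp i i.2 hpi
    have := abs_le.1 (hFp i)
    simp only [boxGapLin, neg_neg]
    linarith

theorem eventually_mem_coordBox_nhdsGT
    (hF : ∀ z ∈ coordBox lo s hi, ∃ L, ∃ U ∈ 𝓝 z, LipschitzOnWith L F U)
    (hlo : ∀ z ∈ coordBox lo s hi, ∀ i, z i = lo i → 0 ≤ F z i)
    (hhi : ∀ z ∈ coordBox lo s hi, ∀ i ∈ s, z i = hi i → F z i ≤ 0)
    {x : ℝ → ι → ℝ} (hx : ∀ t, 0 ≤ t → HasDerivWithinAt x (F (x t)) (Ici 0) t)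
    {τ : ℝ} (hτ : 0 ≤ τ) (hxτ : x τ ∈ coordBox lo s hi) :
    ∀ᶠ t in 𝓝[>] τ, x t ∈ coordBox lo s hi := by
  have hlh : ∀ i ∈ s, lo i ≤ hi i := fun i his => (hxτ i).1.trans ((hxτ i).2 his)
  obtain ⟨L, U, hU, hLip⟩ := hF _ hxτ
  obtain ⟨r, hr, hball⟩ := Metric.mem_nhds_iff.1 hU
  obtain ⟨δ, hδ, hnear⟩ := Metric.continuousWithinAt_iff.1 (hx τ hτ).continuousWithinAt r hr
  have hxU : ∀ t ∈ Icc τ (τ + δ / 2), x t ∈ Metric.ball (x τ) r := fun t ht =>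
    hnear (hτ.trans ht.1) (by rw [Real.dist_eq, abs_of_nonneg (sub_nonneg.2 ht.1)]; linarith [ht.2])
  have hgap : ∀ t ∈ Icc τ (τ + δ / 2), ∀ k, 0 ≤ boxGap lo s hi k (x t) := by
    refine nonneg_of_neg_deriv_le_sum_negPart L.coe_nonneg
      (fun k => (continuous_boxGap k).comp_continuousOn fun t ht =>
        ((hx t (hτ.trans ht.1)).continuousWithinAt.mono fun u hu => hτ.trans hu.1))
      (fun k t ht => ((hx t (hτ.trans ht.1)).mono fun u hu => (hτ.trans ht.1).trans hu).boxGap k)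
      (mem_coordBox_iff_boxGap_nonneg.1 hxτ)
      fun t ht k hk => neg_boxGapLin_le_of_lipschitzOnWith hLip hlo hhi hlh ?_ ?_ k hk
    · exact hball (hxU t (Ico_subset_Icc_self ht))
    · exact hball ((dist_boxClamp_le hxτ (x t)).trans_lt (hxU t (Ico_subset_Icc_self ht)))
  filter_upwards [Ioc_mem_nhdsGT (show τ < τ + δ / 2 by linarith)] with t ht
  exact mem_coordBox_iff_boxGap_nonneg.2 (hgap t (Ioc_subset_Icc_self ht))

theorem coordBox_positively_invariant
    (hF : ∀ z ∈ coordBox lo s hi, ∃ L, ∃ U ∈ 𝓝 z, LipschitzOnWith L F U)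
    (hlo : ∀ z ∈ coordBox lo s hi, ∀ i, z i = lo i → 0 ≤ F z i)
    (hhi : ∀ z ∈ coordBox lo s hi, ∀ i ∈ s, z i = hi i → F z i ≤ 0)
    {x : ℝ → ι → ℝ} (hx : ∀ t, 0 ≤ t → HasDerivWithinAt x (F (x t)) (Ici 0) t)
    (h0 : x 0 ∈ coordBox lo s hi) (t : ℝ) (ht : 0 ≤ t) : x t ∈ coordBox lo s hi := by
  have hcont : ContinuousOn x (Icc 0 t) := fun u hu =>
    (hx u hu.1).continuousWithinAt.mono Icc_subset_Ici_self
  have hclosed : IsClosed ({u | x u ∈ coordBox lo s hi} ∩ Icc 0 t) := by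
    rw [inter_comm]; exact hcont.preimage_isClosed_of_isClosed isClosed_Icc isClosed_coordBox
  refine IsClosed.Icc_subset_of_forall_mem_nhdsWithin hclosed h0
    (fun τ hτ => eventually_mem_coordBox_nhdsGT hF hlo hhi hx hτ.2.1 hτ.1) ⟨ht, le_rfl⟩

end Invariance

section Covid

variable {Λ b q lam μ σ εA γA dA εI γI dI γH dH θ p β₁ β₂ : ℝ}

theorem contDiffAt_covidF {z : Fin 7 → ℝ} (hz : b + z 4 ≠ 0) :
    ContDiffAt ℝ 1 (covidF Λ b q lam μ σ εA γA dA εI γI dI γH dH θ p β₁ β₂) z := by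
  refine contDiffAt_pi.2 fun i => ?_
  fin_cases i <;> simp only [covidF, Fin.isValue, Fin.zero_eta, Fin.mk_one, Fin.reduceFinMk,
    Matrix.cons_val_zero, Matrix.cons_val_one, Matrix.cons_val] <;> fun_prop (disch := assumption)

theorem transmissionRate_nonneg (hb : 0 < b) (hβ₂ : 0 ≤ β₂) (hβ : β₂ ≤ β₁) {I : ℝ} (hI : 0 ≤ I) :
    0 ≤ β₁ - β₂ * I / (b + I) := by
  have : β₂ * I / (b + I) ≤ β₂ := by
    rw [div_le_iff₀ (by linarith)]; nlinarith
  linarith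

-- `S°` and `Q°`: the equilibrium of the `S`–`Q` subsystem in the absence of infection.
noncomputable def diseaseFreeS (Λ q lam μ : ℝ) : ℝ := Λ / μ * ((μ + lam) / (μ + q + lam))

noncomputable def diseaseFreeQ (Λ q lam μ : ℝ) : ℝ := Λ / μ * (q / (μ + q + lam))

theorem diseaseFree_balance_S (hμ : μ ≠ 0) (hμql : μ + q + lam ≠ 0) :
    Λ + lam * diseaseFreeQ Λ q lam μ = (μ + q) * diseaseFreeS Λ q lam μ := by
  unfold diseaseFreeS diseaseFreeQ
  field_simp
  ring

theorem diseaseFree_balance_Q (hμ : μ ≠ 0) (hμql : μ + q + lam ≠ 0) :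
    q * diseaseFreeS Λ q lam μ = (μ + lam) * diseaseFreeQ Λ q lam μ := by
  unfold diseaseFreeS diseaseFreeQ
  field_simp

theorem mem_covidBox_iff {z : Fin 7 → ℝ} {S₀ Q₀ : ℝ} :
    z ∈ coordBox 0 {0, 1} ![S₀, Q₀, 0, 0, 0, 0, 0] ↔ (∀ i, 0 ≤ z i) ∧ z 0 ≤ S₀ ∧ z 1 ≤ Q₀ := by
  refine ⟨fun h => ⟨fun i => (h i).1, (h 0).2 (by simp), (h 1).2 (by simp)⟩, ?_⟩
  rintro ⟨hz, hS, hQ⟩ i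
  refine ⟨hz i, fun hi => ?_⟩
  rcases Finset.mem_insert.1 hi with rfl | hi
  · exact hS
  · rw [Finset.mem_singleton.1 hi]
    exact hQ

theorem covidF_nonneg_of_eq_zero (hΛ : 0 ≤ Λ) (hb : 0 < b) (hq : 0 ≤ q) (hlam : 0 ≤ lam)
    (hσ : 0 ≤ σ) (hεA : 0 ≤ εA) (hγA : 0 ≤ γA) (hεI : 0 ≤ εI) (hγI : 0 ≤ γI) (hγH : 0 ≤ γH)
    (hθ : 0 ≤ θ) (hp0 : 0 ≤ p) (hp1 : p ≤ 1) (hβ₂ : 0 ≤ β₂) (hβ : β₂ ≤ β₁)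
    {z : Fin 7 → ℝ} (hz : ∀ i, 0 ≤ z i) (i : Fin 7) (hi : z i = 0) :
    0 ≤ covidF Λ b q lam μ σ εA γA dA εI γI dI γH dH θ p β₁ β₂ z i := by
  have hrate := transmissionRate_nonneg hb hβ₂ hβ (hz 4)
  fin_cases i <;> simp only [Fin.zero_eta, Fin.mk_one, Fin.reduceFinMk, Fin.isValue] at hi
    <;> simp only [covidF, Fin.isValue, hi, mul_zero, zero_mul, add_zero, zero_add, sub_zero,
      zero_sub, zero_div, Fin.zero_eta, Fin.mk_one, Fin.reduceFinMk, Matrix.cons_val_zero,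
      Matrix.cons_val_one, Matrix.cons_val, ge_iff_le]
  · exact add_nonneg hΛ (mul_nonneg hlam (hz 1))
  · exact mul_nonneg hq (hz 0)
  · exact mul_nonneg (mul_nonneg hrate (hz 0)) (add_nonneg (hz 4) (mul_nonneg hθ (hz 3)))
  · exact mul_nonneg (mul_nonneg (sub_nonneg.2 hp1) hσ) (hz 2)
  · exact mul_nonneg (mul_nonneg hσ hp0) (hz 2)
  · exact add_nonneg (mul_nonneg hεI (hz 4)) (mul_nonneg hεA (hz 3))
  · exact add_nonneg (add_nonneg (mul_nonneg hγH (hz 5)) (mul_nonneg hγI (hz 4)))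
      (mul_nonneg hγA (hz 3))

theorem covidF_zero_nonpos_of_eq (hμ : 0 < μ) (hb : 0 < b) (hq : 0 ≤ q) (hlam : 0 ≤ lam)
    (hθ : 0 ≤ θ) (hβ₂ : 0 ≤ β₂) (hβ : β₂ ≤ β₁) {z : Fin 7 → ℝ} (hz : ∀ i, 0 ≤ z i)
    (hQ : z 1 ≤ diseaseFreeQ Λ q lam μ) (hS : z 0 = diseaseFreeS Λ q lam μ) :
    covidF Λ b q lam μ σ εA γA dA εI γI dI γH dH θ p β₁ β₂ z 0 ≤ 0 := by
  have hinf : 0 ≤ (β₁ - β₂ * z 4 / (b + z 4)) * z 0 * (z 4 + θ * z 3) :=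
    mul_nonneg (mul_nonneg (transmissionRate_nonneg hb hβ₂ hβ (hz 4)) (hz 0))
      (add_nonneg (hz 4) (mul_nonneg hθ (hz 3)))
  have hlamQ := mul_le_mul_of_nonneg_left hQ hlam
  have := diseaseFree_balance_S (Λ := Λ) (q := q) (lam := lam) hμ.ne' (by positivity)
  simp only [covidF, Fin.isValue, Matrix.cons_val_zero]
  rw [hS] at hinf ⊢
  linarith

theorem covidF_one_nonpos_of_eq (hμ : 0 < μ) (hq : 0 ≤ q) (hlam : 0 ≤ lam) {z : Fin 7 → ℝ}
    (hS : z 0 ≤ diseaseFreeS Λ q lam μ) (hQ : z 1 = diseaseFreeQ Λ q lam μ) :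
    covidF Λ b q lam μ σ εA γA dA εI γI dI γH dH θ p β₁ β₂ z 1 ≤ 0 := by
  have hqS := mul_le_mul_of_nonneg_left hS hq
  have := diseaseFree_balance_Q (Λ := Λ) (q := q) (lam := lam) hμ.ne' (by positivity)
  simp only [covidF, Fin.isValue, Matrix.cons_val_one, Matrix.cons_val_zero]
  rw [hQ]
  linarith

end Covid

theorem covid_region_S_positively_invariant_general
    (Λ b q lam μ σ εA γA dA εI γI dI γH dH θ p β₁ β₂ : ℝ)
    (hΛ : 0 < Λ) (hb : 0 < b) (hq : 0 < q) (hlam : 0 < lam) (hμ : 0 < μ)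
    (hσ : 0 < σ) (hεA : 0 < εA) (hγA : 0 < γA)
    (hεI : 0 < εI) (hγI : 0 < γI) (hγH : 0 < γH)
    (hθ : θ ∈ Set.Ioo (0 : ℝ) 1) (hp : p ∈ Set.Ioo (0 : ℝ) 1)
    (hβ₂ : 0 < β₂) (hβ : β₂ ≤ β₁)
    (x : ℝ → Fin 7 → ℝ)
    (hx : IsSolution (covidF Λ b q lam μ σ εA γA dA εI γI dI γH dH θ p β₁ β₂) x)
    (h0 : (∀ i, 0 ≤ x 0 i) ∧ x 0 0 ≤ Λ / μ * ((μ + lam) / (μ + q + lam)) ∧ x 0 1 ≤ Λ / μ * (q / (μ + q + lam))) :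
    ∀ t : ℝ, 0 ≤ t →
      (∀ i, 0 ≤ x t i) ∧ x t 0 ≤ Λ / μ * ((μ + lam) / (μ + q + lam)) ∧ x t 1 ≤ Λ / μ * (q / (μ + q + lam)) := by
  intro t ht
  refine mem_covidBox_iff.1 <| coordBox_positively_invariant
    (hi := ![diseaseFreeS Λ q lam μ, diseaseFreeQ Λ q lam μ, 0, 0, 0, 0, 0])
    (fun z hz => (contDiffAt_covidF ?_).exists_lipschitzOnWith) (fun z hz => ?_)
    (fun z hz i hs => ?_) hx (mem_covidBox_iff.2 h0) t ht
  · have := (mem_covidBox_iff.1 hz).1 4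
    positivity
  · exact covidF_nonneg_of_eq_zero hΛ.le hb hq.le hlam.le hσ.le hεA.le hγA.le hεI.le hγI.le
      hγH.le hθ.1.le hp.1.le hp.2.le hβ₂.le hβ (mem_covidBox_iff.1 hz).1
  · obtain ⟨hz0, hzS, hzQ⟩ := mem_covidBox_iff.1 hz
    simp only [Finset.mem_insert, Finset.mem_singleton] at hs
    rcases hs with rfl | rfl
    · exact covidF_zero_nonpos_of_eq hμ hb hq.le hlam.le hθ.1.le hβ₂.le hβ hz0 hzQ
    · exact covidF_one_nonpos_of_eq hμ hq.le hlam.le hzS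

/-- the region
`𝒮 = { x ≥ 0 : S ≤ S° and Q ≤ Q° }` is positively invariant, where
`S° = (Λ/μ)(μ+λ)/(μ+q+λ)` and `Q° = (Λ/μ)q/(μ+q+λ)`. -/
theorem covid_region_S_positively_invariant
    (Λ b q lam μ σ εA γA dA εI γI dI γH dH θ p β₁ β₂ : ℝ)
    (hΛ : 0 < Λ) (hb : 0 < b) (hq : 0 < q) (hlam : 0 < lam) (hμ : 0 < μ)
    (hσ : 0 < σ) (hεA : 0 < εA) (hγA : 0 < γA) (hdA : 0 < dA)
    (hεI : 0 < εI) (hγI : 0 < γI) (hdI : 0 < dI) (hγH : 0 < γH) (hdH : 0 < dH)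
    (hθ : θ ∈ Set.Ioo (0 : ℝ) 1) (hp : p ∈ Set.Ioo (0 : ℝ) 1)
    (hβ₂ : 0 < β₂) (hβ : β₂ ≤ β₁)
    (x : ℝ → Fin 7 → ℝ)
    (hx : IsSolution (covidF Λ b q lam μ σ εA γA dA εI γI dI γH dH θ p β₁ β₂) x)
    (h0 : (∀ i, 0 ≤ x 0 i) ∧ x 0 0 ≤ Λ / μ * ((μ + lam) / (μ + q + lam)) ∧ x 0 1 ≤ Λ / μ * (q / (μ + q + lam))) :
    ∀ t : ℝ, 0 ≤ t →
      (∀ i, 0 ≤ x t i) ∧ x t 0 ≤ Λ / μ * ((μ + lam) / (μ + q + lam)) ∧ x t 1 ≤ Λ / μ * (q / (μ + q + lam)) :=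
  covid_region_S_positively_invariant_general Λ b q lam μ σ εA γA dA εI γI dI γH dH θ p β₁ β₂ hΛ hb
    hq hlam hμ hσ hεA hγA hεI hγI hγH hθ hp hβ₂ hβ x hx h0
end

section
/- The 3×3 real matrix V = [[μ+σ, 0, 0], [−(1−p)σ, μ+d_A+ε_A+γ_A, 0], [−σp, 0, μ+d_I+ε_I+γ_I]] is invertible, and the spectral radius of the next-generation matrix F·V⁻¹, where F = [[0, θβ₁S°, β₁S°], [0, 0, 0], [0, 0, 0]], equals (θ(1−p)/(μ+d_A+ε_A+γ_A) + p/(μ+d_I+ε_I+γ_I))·σβ₁S°/(μ+σ). -/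
/-!
Since `V` is lower triangular with positive diagonal it is invertible, and since only the first
row of `F` is nonzero the same holds for `F * V⁻¹`. Such a matrix is upper triangular, so its
eigenvalues are its diagonal entries: its `(0, 0)` entry, which is `R₀`, and zeros.
-/

open scoped ENNReal

namespace Matrix

section Triangular

variable {n : Type*} [Fintype n] [DecidableEq n] [LinearOrder n]

theorem spectrum_eq_range_diag_of_isUpperTriangular {K : Type*} [Field K] {A : Matrix n n K}
    (hA : A.IsUpperTriangular) : spectrum K A = Set.range A.diag := by
  ext r
  rw [mem_spectrum_iff_isRoot_charpoly, charpoly_of_isUpperTriangular _ hA, Polynomial.IsRoot,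
    Polynomial.eval_prod]
  simp only [Finset.prod_eq_zero_iff, Finset.mem_univ, true_and, Polynomial.eval_sub,
    Polynomial.eval_X, Polynomial.eval_C, sub_eq_zero, Set.mem_range, diag_apply]
  exact exists_congr fun _ => eq_comm

theorem spectralRadius_eq_iSup_nnnorm_diag_of_isUpperTriangular {K : Type*} [NormedField K]
    {A : Matrix n n K} (hA : A.IsUpperTriangular) :
    spectralRadius K A = ⨆ i, (‖A i i‖₊ : ℝ≥0∞) := by
  rw [spectralRadius, spectrum_eq_range_diag_of_isUpperTriangular hA, iSup_range]
  rfl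

end Triangular

theorem spectralRadius_eq_nnnorm_of_forall_row_eq_zero {K : Type*} [NormedField K] {m : ℕ}
    {A : Matrix (Fin (m + 1)) (Fin (m + 1)) K} (hA : ∀ i ≠ 0, A i = 0) :
    spectralRadius K A = ‖A 0 0‖₊ := by
  have hdiag : ∀ i ≠ 0, A i i = 0 := fun i hi => by rw [hA i hi, Pi.zero_apply]
  have hupper : A.IsUpperTriangular := fun i j hji => by
    rw [hA i (Fin.ne_zero_of_lt hji), Pi.zero_apply]
  rw [spectralRadius_eq_iSup_nnnorm_diag_of_isUpperTriangular hupper]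
  refine le_antisymm (iSup_le fun i => ?_) (le_iSup (fun i => (‖A i i‖₊ : ℝ≥0∞)) 0)
  rcases eq_or_ne i 0 with rfl | hi
  · exact le_rfl
  · simp [hdiag i hi]

theorem spectralRadius_map_ofReal_eq_of_forall_row_eq_zero {m : ℕ}
    {A : Matrix (Fin (m + 1)) (Fin (m + 1)) ℝ} (hA : ∀ i ≠ 0, A i = 0) (h₀ : 0 ≤ A 0 0) :
    spectralRadius ℂ (A.map ((↑) : ℝ → ℂ)) = ENNReal.ofReal (A 0 0) := by
  have hA' : ∀ i ≠ 0, A.map ((↑) : ℝ → ℂ) i = 0 := fun i hi => by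
    ext j
    simp [hA i hi]
  rw [spectralRadius_eq_nnnorm_of_forall_row_eq_zero hA', map_apply, Complex.nnnorm_real]
  exact Real.enorm_eq_ofReal h₀

section LowerArrow

variable {K : Type*} [Field K] {a b c : K}

theorem isUnit_lowerArrow_fin_three (u v : K) (ha : a ≠ 0) (hb : b ≠ 0) (hc : c ≠ 0) :
    IsUnit !![a, 0, 0; u, b, 0; v, 0, c] := by
  rw [isUnit_iff_isUnit_det, det_fin_three]
  simp [ha, hb, hc]

theorem inv_lowerArrow_fin_three (u v : K) (ha : a ≠ 0) (hb : b ≠ 0) (hc : c ≠ 0) :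
    (!![a, 0, 0; u, b, 0; v, 0, c])⁻¹ =
      !![a⁻¹, 0, 0; -(u / (a * b)), b⁻¹, 0; -(v / (a * c)), 0, c⁻¹] := by
  refine inv_eq_right_inv ?_
  ext i j
  fin_cases i <;> fin_cases j <;> simp [mul_apply, Fin.sum_univ_three] <;> field_simp <;> ring

end LowerArrow

end Matrix

/-- the transition matrix `V` is invertible and the spectral radius of the
next-generation matrix `F·V⁻¹` equals
`(θ(1−p)/(μ+d_A+ε_A+γ_A) + p/(μ+d_I+ε_I+γ_I))·σβ₁S°/(μ+σ)`. -/
theorem covid_next_generation_spectral_radius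
    (Λ q lam μ σ εA γA dA εI γI dI θ p β₁ : ℝ)
    (hΛ : 0 < Λ) (hq : 0 < q) (hlam : 0 < lam) (hμ : 0 < μ) (hσ : 0 < σ)
    (hεA : 0 < εA) (hγA : 0 < γA) (hdA : 0 < dA)
    (hεI : 0 < εI) (hγI : 0 < γI) (hdI : 0 < dI)
    (hθ : θ ∈ Set.Ioo (0 : ℝ) 1) (hp : p ∈ Set.Ioo (0 : ℝ) 1) (hβ₁ : 0 < β₁) :
    IsUnit (!![μ + σ, 0, 0;
               -((1 - p) * σ), μ + dA + εA + γA, 0;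
               -(σ * p), 0, μ + dI + εI + γI] : Matrix (Fin 3) (Fin 3) ℝ) ∧
    spectralRadius ℂ
      (((!![0, θ * β₁ * (Λ / μ * ((μ + lam) / (μ + q + lam))),
              β₁ * (Λ / μ * ((μ + lam) / (μ + q + lam)));
            0, 0, 0;
            0, 0, 0] : Matrix (Fin 3) (Fin 3) ℝ) *
        (!![μ + σ, 0, 0;
            -((1 - p) * σ), μ + dA + εA + γA, 0;
            -(σ * p), 0, μ + dI + εI + γI] : Matrix (Fin 3) (Fin 3) ℝ)⁻¹).map
        (fun r : ℝ => (r : ℂ))) =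
      ENNReal.ofReal
        ((θ * (1 - p) / (μ + dA + εA + γA) + p / (μ + dI + εI + γI)) *
          (σ * β₁ * (Λ / μ * ((μ + lam) / (μ + q + lam))) / (μ + σ))) := by
  set S := Λ / μ * ((μ + lam) / (μ + q + lam))
  set a := μ + σ
  set b := μ + dA + εA + γA
  set c := μ + dI + εI + γI
  have ha : a ≠ 0 := by positivity
  have hb : b ≠ 0 := by positivity
  have hc : c ≠ 0 := by positivity
  refine ⟨Matrix.isUnit_lowerArrow_fin_three _ _ ha hb hc, ?_⟩
  rw [Matrix.inv_lowerArrow_fin_three _ _ ha hb hc,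
    Matrix.spectralRadius_map_ofReal_eq_of_forall_row_eq_zero]
  · congr 1
    simp [Matrix.mul_apply, Fin.sum_univ_three]
    field_simp
  · intro i hi
    ext j
    fin_cases i <;> simp at hi ⊢
  · obtain ⟨hθ₀, -⟩ := hθ
    obtain ⟨hp₀, hp₁⟩ := hp
    have h1p : 0 < 1 - p := sub_pos.mpr hp₁
    simp [Matrix.mul_apply, Fin.sum_univ_three, neg_div]
    positivity
end

section
/- Every complex eigenvalue of the 4×4 real matrix −W₄ = [[−(μ+q), λ, 0, 0], [q, −(μ+λ), 0, 0], [0, 0, −(μ+d_H+γ_H), 0], [0, 0, γ_H, −μ]] has strictly negative real part. -/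
lemma quad_root_neg_re (b c : ℝ) (hb : 0 < b) (hc : 0 < c) (z : ℂ)
    (h : z ^ 2 + (b : ℂ) * z + (c : ℂ) = 0) : z.re < 0 := by
  have hre : z.re ^ 2 - z.im ^ 2 + b * z.re + c = 0 := by
    have := congrArg Complex.re h
    simpa [Complex.add_re, Complex.mul_re, pow_two, Complex.mul_im] using this
  have him : z.im * (2 * z.re + b) = 0 := by
    have := congrArg Complex.im h
    simp [Complex.add_im, Complex.mul_im, pow_two, Complex.mul_re] at this
    ring_nf
    ring_nf at this
    linarith
  rcases mul_eq_zero.mp him with h0 | h0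
  · -- z is real: z.re^2 + b z.re + c = 0
    have : z.re ^ 2 + b * z.re + c = 0 := by rw [h0] at hre; linarith [hre]
    by_contra hge
    push_neg at hge
    nlinarith [sq_nonneg z.re]
  · nlinarith

/-- every complex eigenvalue of the matrix `−W₄` (the Jacobian block of the
uninfected compartments at the disease-free equilibrium) has strictly negative real part. -/
theorem covid_negW4_eigenvalues_negative_real_part
    (q lam μ dH γH : ℝ)
    (hq : 0 < q) (hlam : 0 < lam) (hμ : 0 < μ) (hdH : 0 < dH) (hγH : 0 < γH) :
    ∀ z : ℂ,
      z ∈ spectrum ℂ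
        ((!![-(μ + q), lam, 0, 0;
             q, -(μ + lam), 0, 0;
             0, 0, -(μ + dH + γH), 0;
             0, 0, γH, -μ] : Matrix (Fin 4) (Fin 4) ℝ).map (fun r : ℝ => (r : ℂ))) →
      z.re < 0 := by
  intro z hz
  rw [spectrum.mem_iff] at hz
  rw [Matrix.isUnit_iff_isUnit_det, isUnit_iff_ne_zero, not_not] at hz
  simp (config := { decide := true }) [Matrix.det_succ_row_zero, Fin.sum_univ_succ,
    Matrix.algebraMap_matrix_apply, Fin.succ_ne_zero,
    show Fin.succAbove (1 : Fin 4) 2 = 3 from rfl] at hz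
  -- hz should now be a polynomial equation in z
  have hfac : (z ^ 2 + ((q : ℂ) + 2 * μ + lam) * z + ((μ : ℂ) * (μ + lam + q)))
      * ((z + (μ + dH + γH)) * (z + μ)) = 0 := by
    rw [← hz]; ring
  rcases mul_eq_zero.mp hfac with h1 | h2
  · exact quad_root_neg_re (q + 2 * μ + lam) (μ * (μ + lam + q)) (by linarith)
      (by nlinarith) z (by push_cast [← h1]; ring)
  · rcases mul_eq_zero.mp h2 with h | h
    · have : z = -((μ : ℂ) + dH + γH) := by linear_combination h
      rw [this]; simp only [Complex.neg_re, Complex.add_re, Complex.ofReal_re]; linarith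
    · have : z = -(μ : ℂ) := by linear_combination h
      rw [this]; simpa using hμ
end

section
/- Every solution (S(t), Q(t), H(t), R(t)) of the linear disease-free system S′ = Λ + λQ − (μ+q)S, Q′ = qS − (μ+λ)Q, H′ = −(μ+d_H+γ_H)H, R′ = γ_H·H − μR converges as t → ∞ to the equilibrium (S°, Q°, 0, 0). -/
/-!
The total population `N = S + Q` solves `N' = Λ - μ N`, and then `Q' = q N - (μ + q + λ) Q`;
likewise `H` is a free decay and `R` is driven by `H`. So every component solves a scalar
equation `f' = g - c f` with `c > 0` whose input `g` already converges, and such an `f` tends to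
`lim g / c`: comparing `f` with the explicit solution `δ + (f T - δ) e^{-c (t - T)}` for the
constant input `c δ` traps `f` eventually on either side of `lim g / c`.
-/

open Filter Set Topology Real

section ScalarLinearODE

variable {f w : ℝ → ℝ} {c δ : ℝ}

theorem le_of_hasDerivWithinAt_sub_mul_self {T : ℝ}
    (hf : ∀ t ≥ T, HasDerivWithinAt f (w t - c * f t) (Ici T) t) (hw : ∀ t ≥ T, w t < c * δ) :
    ∀ t ≥ T, f t ≤ δ + (f T - δ) * exp (-(c * (t - T))) := by
  set B : ℝ → ℝ := fun s ↦ δ + (f T - δ) * exp (-(c * (s - T)))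
  have hB : ∀ s, HasDerivAt B (c * δ - c * B s) s := fun s ↦ by
    have := ((((hasDerivAt_id s).sub_const T).const_mul c).neg.exp.const_mul (f T - δ)).const_add δ
    exact this.congr_deriv (by simp only [B, Pi.neg_apply, id]; ring)
  intro t ht
  refine image_le_of_deriv_right_lt_deriv_boundary (a := T) (b := t)
    (fun x hx ↦ (hf x hx.1).continuousWithinAt.mono Icc_subset_Ici_self)
    (fun x hx ↦ (hf x hx.1).mono (Ici_subset_Ici.2 hx.1)) (by simp [B]) hB
    (fun x hx hfB ↦ ?_) ⟨ht, le_rfl⟩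
  rw [hfB]
  linarith [hw x hx.1]

variable {a : ℝ}

theorem eventually_lt_of_hasDerivWithinAt_sub_mul_self (hc : 0 < c)
    (hf : ∀ t ≥ a, HasDerivWithinAt f (w t - c * f t) (Ici a) t)
    (hw : ∀ᶠ t in atTop, w t < c * δ) {ε : ℝ} (hδε : δ < ε) : ∀ᶠ t in atTop, f t < ε := by
  obtain ⟨T₀, hT₀⟩ := eventually_atTop.1 hw
  set T := max a T₀
  have hbound := le_of_hasDerivWithinAt_sub_mul_self (T := T)
    (fun t ht ↦ (hf t (le_of_max_le_left ht)).mono (Ici_subset_Ici.2 le_sup_left))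
    (fun t ht ↦ hT₀ t (le_of_max_le_right ht))
  have hdecay : Tendsto (fun t ↦ δ + (f T - δ) * exp (-(c * (t - T)))) atTop (𝓝 δ) := by
    have : Tendsto (fun t ↦ -(c * (t - T))) atTop atBot :=
      tendsto_neg_atTop_atBot.comp
        ((tendsto_atTop_add_const_right _ _ tendsto_id).const_mul_atTop hc)
    simpa using ((tendsto_exp_atBot.comp this).const_mul (f T - δ)).const_add δ
  filter_upwards [eventually_ge_atTop T, hdecay.eventually_lt_const hδε] with t ht hlt
  exact (hbound t ht).trans_lt hlt

theorem tendsto_of_hasDerivWithinAt_sub_mul_self {g : ℝ → ℝ} {L : ℝ} (hc : 0 < c)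
    (hf : ∀ t ≥ a, HasDerivWithinAt f (g t - c * f t) (Ici a) t) (hg : Tendsto g atTop (𝓝 L)) :
    Tendsto f atTop (𝓝 (L / c)) := by
  refine tendsto_order.2 ⟨fun ε hε ↦ ?_, fun ε hε ↦ ?_⟩
  · obtain ⟨δ, hεδ, hδ⟩ := exists_between hε
    have hneg : ∀ t ≥ a, HasDerivWithinAt (-f) (-g t - c * (-f) t) (Ici a) t := fun t ht ↦
      (hf t ht).neg.congr_deriv (by simp only [Pi.neg_apply]; ring)
    have hgδ : ∀ᶠ t in atTop, -g t < c * -δ :=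
      (hg.eventually_const_lt ((lt_div_iff₀' hc).1 hδ)).mono fun t ht ↦ by linarith
    filter_upwards [eventually_lt_of_hasDerivWithinAt_sub_mul_self hc hneg hgδ (neg_lt_neg hεδ)]
      with t ht
    simpa using ht
  · obtain ⟨δ, hδ, hδε⟩ := exists_between hε
    exact eventually_lt_of_hasDerivWithinAt_sub_mul_self hc hf
      (hg.eventually_lt_const ((div_lt_iff₀' hc).1 hδ)) hδε

end ScalarLinearODE

theorem covid_disease_free_linear_system_GAS_general
    (Λ q lam μ dH γH : ℝ)
    (hq : 0 < q) (hlam : 0 < lam) (hμ : 0 < μ) (hdH : 0 < dH) (hγH : 0 < γH)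
    (S Q H R : ℝ → ℝ)
    (hS : ∀ t : ℝ, 0 ≤ t →
      HasDerivWithinAt S (Λ + lam * Q t - (μ + q) * S t) (Set.Ici (0 : ℝ)) t)
    (hQ : ∀ t : ℝ, 0 ≤ t →
      HasDerivWithinAt Q (q * S t - (μ + lam) * Q t) (Set.Ici (0 : ℝ)) t)
    (hH : ∀ t : ℝ, 0 ≤ t →
      HasDerivWithinAt H (-((μ + dH + γH) * H t)) (Set.Ici (0 : ℝ)) t)
    (hR : ∀ t : ℝ, 0 ≤ t →
      HasDerivWithinAt R (γH * H t - μ * R t) (Set.Ici (0 : ℝ)) t) :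
    Filter.Tendsto S Filter.atTop (nhds (Λ / μ * ((μ + lam) / (μ + q + lam)))) ∧
    Filter.Tendsto Q Filter.atTop (nhds (Λ / μ * (q / (μ + q + lam)))) ∧
    Filter.Tendsto H Filter.atTop (nhds 0) ∧
    Filter.Tendsto R Filter.atTop (nhds 0) := by
  have hN : Tendsto (S + Q) atTop (𝓝 (Λ / μ)) :=
    tendsto_of_hasDerivWithinAt_sub_mul_self (g := fun _ ↦ Λ) hμ
      (fun t ht ↦ ((hS t ht).add (hQ t ht)).congr_deriv (by simp only [Pi.add_apply]; ring))
      tendsto_const_nhds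
  have hQlim : Tendsto Q atTop (𝓝 (Λ / μ * (q / (μ + q + lam)))) := by
    have := tendsto_of_hasDerivWithinAt_sub_mul_self (c := μ + q + lam) (by positivity)
      (fun t ht ↦ (hQ t ht).congr_deriv (by simp only [Pi.add_apply]; ring)) (hN.const_mul q)
    convert this using 2
    ring
  have hHlim : Tendsto H atTop (𝓝 0) := by
    simpa using tendsto_of_hasDerivWithinAt_sub_mul_self (g := fun _ ↦ 0) (c := μ + dH + γH)
      (by positivity) (fun t ht ↦ (hH t ht).congr_deriv (by simp)) tendsto_const_nhds
  refine ⟨?_, hQlim, hHlim, ?_⟩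
  · convert (hN.sub hQlim).congr (fun t ↦ add_sub_cancel_right (S t) (Q t)) using 2
    field_simp
    ring
  · simpa using tendsto_of_hasDerivWithinAt_sub_mul_self hμ hR (hHlim.const_mul γH)

/-- every solution of the linear disease-free system converges to
`(S°, Q°, 0, 0)` as `t → ∞`. -/
theorem covid_disease_free_linear_system_GAS
    (Λ q lam μ dH γH : ℝ)
    (hΛ : 0 < Λ) (hq : 0 < q) (hlam : 0 < lam) (hμ : 0 < μ) (hdH : 0 < dH) (hγH : 0 < γH)
    (S Q H R : ℝ → ℝ)
    (hS : ∀ t : ℝ, 0 ≤ t →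
      HasDerivWithinAt S (Λ + lam * Q t - (μ + q) * S t) (Set.Ici (0 : ℝ)) t)
    (hQ : ∀ t : ℝ, 0 ≤ t →
      HasDerivWithinAt Q (q * S t - (μ + lam) * Q t) (Set.Ici (0 : ℝ)) t)
    (hH : ∀ t : ℝ, 0 ≤ t →
      HasDerivWithinAt H (-((μ + dH + γH) * H t)) (Set.Ici (0 : ℝ)) t)
    (hR : ∀ t : ℝ, 0 ≤ t →
      HasDerivWithinAt R (γH * H t - μ * R t) (Set.Ici (0 : ℝ)) t) :
    Filter.Tendsto S Filter.atTop (nhds (Λ / μ * ((μ + lam) / (μ + q + lam)))) ∧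
    Filter.Tendsto Q Filter.atTop (nhds (Λ / μ * (q / (μ + q + lam)))) ∧
    Filter.Tendsto H Filter.atTop (nhds 0) ∧
    Filter.Tendsto R Filter.atTop (nhds 0) :=
  covid_disease_free_linear_system_GAS_general Λ q lam μ dH γH hq hlam hμ hdH hγH S Q H R hS hQ hH
    hR
end

section
/- Suppose R₀ < 1, and let M be a subset of the nonnegative orthant of ℝ⁷ that is positively invariant for the COVID-19 system and such that (β₁S° − (β₁ − β₂·I/(b+I))·S)·(I + θA) ≥ 0 for every (S,Q,E,A,I,H,R) ∈ M. Then for every solution x with x(0) ∈ M, the infected components satisfy E(t) → 0, A(t) → 0 and I(t) → 0 as t → ∞, and x(t) converges to the disease-free equilibrium ℰ° = (S°, Q°, 0, 0, 0, 0, 0). -/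
open scoped BigOperators

/-! Along a solution the components stay nonnegative, and the hypothesis on `M` bounds the
incidence `(β₁ - β₂ I / (b + I)) S (I + θ A)` by `β₁ S° (I + θ A)`. Since `R₀ < 1`, there are
`a, c, ε > 0` with `V' ≤ -ε V` for `V = E + a A + c I`, so `E, A, I → 0`. The total population
satisfies `N' ≤ Λ - μ N`, so `S` stays bounded and the incidence tends to `0`. Then
`S + Q - (S° + Q°)`, `Q - Q°`, `H` and `R` each solve a linear equation `y' = h - k y` with
`k > 0` and forcing `h → 0`, hence tend to `0`. -/

open Filter Topology Set

theorem tendsto_gronwallBound_of_neg {δ K ε : ℝ} (hK : K < 0) :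
    Tendsto (gronwallBound δ K ε) atTop (𝓝 (-(ε / K))) := by
  rw [gronwallBound_of_K_ne_0 hK.ne]
  have hexp : Tendsto (fun x => Real.exp (K * x)) atTop (𝓝 0) :=
    Real.tendsto_exp_atBot.comp (tendsto_id.const_mul_atTop_of_neg hK)
  simpa using (hexp.const_mul δ).add ((hexp.sub_const 1).const_mul (ε / K))

theorem eventually_lt_of_hasDerivWithinAt_le {y d h : ℝ → ℝ} {k L r : ℝ} (hk : 0 < k)
    (hy : ∀ t ∈ Ici (0 : ℝ), HasDerivWithinAt y (d t) (Ici 0) t)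
    (hd : ∀ t ∈ Ici (0 : ℝ), d t ≤ -k * y t + h t) (hh : Tendsto h atTop (𝓝 L))
    (hr : L / k < r) : ∀ᶠ t in atTop, y t < r := by
  obtain ⟨c, hLc, hck⟩ := exists_between ((div_lt_iff₀' hk).1 hr)
  obtain ⟨T₁, hT₁⟩ := eventually_atTop.1 (hh.eventually (gt_mem_nhds hLc))
  set T := max T₁ 0
  have hsub : ∀ s ∈ Ici T, Ici s ⊆ Ici (0 : ℝ) := fun s hs =>
    Ici_subset_Ici.2 ((le_max_right _ _).trans hs)
  have hbound : ∀ t ≥ T, y t ≤ gronwallBound (y T) (-k) c (t - T) := by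
    intro t ht
    refine le_gronwallBound_of_liminf_deriv_right_le (f' := d) (b := t)
      (fun s hs => ((hy s (hsub s hs.1 self_mem_Ici)).continuousWithinAt).mono
        (Icc_subset_Ici_self.trans (hsub T self_mem_Ici)))
      (fun s hs r hr =>
        ((hy s (hsub s hs.1 self_mem_Ici)).mono (hsub s hs.1)).liminf_right_slope_le hr)
      le_rfl (fun s hs => ?_) t ⟨ht, le_rfl⟩
    linarith [hd s (hsub s hs.1 self_mem_Ici), hT₁ s ((le_max_left _ _).trans hs.1)]
  have hlim : Tendsto (fun t => gronwallBound (y T) (-k) c (t - T)) atTop (𝓝 (c / k)) := by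
    have := (tendsto_gronwallBound_of_neg (δ := y T) (ε := c) (neg_lt_zero.2 hk)).comp
      (tendsto_atTop_add_const_right atTop (-T) tendsto_id)
    simpa only [div_neg, neg_neg, Function.comp_def, ← sub_eq_add_neg, id] using this
  filter_upwards [eventually_ge_atTop T, hlim.eventually (gt_mem_nhds ((div_lt_iff₀' hk).2 hck))]
    with t ht hlt
  exact (hbound t ht).trans_lt hlt

theorem tendsto_zero_of_hasDerivWithinAt_sub_mul {y h : ℝ → ℝ} {k : ℝ} (hk : 0 < k)
    (hy : ∀ t ∈ Ici (0 : ℝ), HasDerivWithinAt y (h t - k * y t) (Ici 0) t)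
    (hh : Tendsto h atTop (𝓝 0)) : Tendsto y atTop (𝓝 0) := by
  refine tendsto_order.2 ⟨fun r hr => ?_, fun r hr =>
    eventually_lt_of_hasDerivWithinAt_le hk hy (fun t _ => by linarith) hh (by simpa using hr)⟩
  have hneg := eventually_lt_of_hasDerivWithinAt_le (y := fun t => -y t) (r := -r) hk
    (fun t ht => (hy t ht).neg) (fun t _ => by linarith) hh.neg (by simpa using hr)
  exact hneg.mono fun t ht => by linarith

theorem tendsto_zero_of_nonneg_of_hasDerivWithinAt_le {V d : ℝ → ℝ} {k : ℝ} (hk : 0 < k)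
    (hV : ∀ t ∈ Ici (0 : ℝ), HasDerivWithinAt V (d t) (Ici 0) t)
    (hd : ∀ t ∈ Ici (0 : ℝ), d t ≤ -k * V t) (hV0 : ∀ t ∈ Ici (0 : ℝ), 0 ≤ V t) :
    Tendsto V atTop (𝓝 0) :=
  tendsto_order.2 ⟨fun r hr => (eventually_ge_atTop 0).mono fun t ht => hr.trans_le (hV0 t ht),
    fun r hr => eventually_lt_of_hasDerivWithinAt_le (h := fun _ => 0) hk hV
      (fun t ht => by linarith [hd t ht]) tendsto_const_nhds (by simpa using hr)⟩

theorem exists_pos_lyapunov_coeffs {α β u v kE kA kI : ℝ}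
    (hu : 0 < u) (hv : 0 < v) (hkA : 0 < kA) (hkI : 0 < kI)
    (h : α * u / kA + β * v / kI < kE) :
    ∃ a c ε : ℝ, 0 < a ∧ 0 < c ∧ 0 < ε ∧
      α * a + β * c ≤ kE - ε ∧ u ≤ (kA - ε) * a ∧ v ≤ (kI - ε) * c := by
  set f : ℝ → ℝ := fun ε => α * (u / (kA - ε)) + β * (v / (kI - ε)) + ε
  have hf : Tendsto f (𝓝[>] 0) (𝓝 (α * u / kA + β * v / kI)) := by
    have : ContinuousAt f 0 := by fun_prop (disch := simp [hkA.ne', hkI.ne'])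
    simpa [f, mul_div_assoc] using this.tendsto.mono_left nhdsWithin_le_nhds
  obtain ⟨ε, hfε, ⟨hεA, hεI⟩, hε⟩ := ((hf.eventually (gt_mem_nhds h)).and
    (((eventually_lt_nhds hkA).and (eventually_lt_nhds hkI)).filter_mono nhdsWithin_le_nhds |>.and
      self_mem_nhdsWithin)).exists
  have hA : 0 < kA - ε := sub_pos.2 hεA
  have hI : 0 < kI - ε := sub_pos.2 hεI
  refine ⟨u / (kA - ε), v / (kI - ε), ε, by positivity, by positivity, hε, by linarith [hfε],
    (mul_div_cancel₀ u hA.ne').ge, (mul_div_cancel₀ v hI.ne').ge⟩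

theorem tendsto_zero_of_nonneg_of_mul_le {α : Type*} {l : Filter α} {f g : α → ℝ} {w : ℝ}
    (hw : 0 < w) (hf : ∀ᶠ t in l, 0 ≤ f t ∧ w * f t ≤ g t) (hg : Tendsto g l (𝓝 0)) :
    Tendsto f l (𝓝 0) :=
  tendsto_of_tendsto_of_tendsto_of_le_of_le' tendsto_const_nhds (by simpa using hg.div_const w)
    (hf.mono fun _ h => h.1) (hf.mono fun _ h => (le_div_iff₀' hw).2 h.2)

noncomputable def covidIncidence (b θ β₁ β₂ : ℝ) (y : Fin 7 → ℝ) : ℝ :=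
  (β₁ - β₂ * y 4 / (b + y 4)) * y 0 * (y 4 + θ * y 3)

theorem IsSolution.hasDerivWithinAt_apply {F : (Fin 7 → ℝ) → Fin 7 → ℝ} {x : ℝ → Fin 7 → ℝ}
    (hx : IsSolution F x) (i : Fin 7) :
    ∀ t ∈ Ici (0 : ℝ), HasDerivWithinAt (fun τ => x τ i) (F (x t) i) (Ici 0) t :=
  fun t ht => hasDerivWithinAt_pi.1 (hx t ht) i

section Covid

variable {Λ b q lam μ σ εA γA dA εI γI dI γH dH θ p β₁ β₂ : ℝ} {x : ℝ → Fin 7 → ℝ}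

local notation "𝓕" => covidF Λ b q lam μ σ εA γA dA εI γI dI γH dH θ p β₁ β₂
local notation "S°" => Λ / μ * ((μ + lam) / (μ + q + lam))
local notation "Q°" => Λ / μ * (q / (μ + q + lam))

theorem covidIncidence_nonneg_le (hb : 0 ≤ b) (hβ₂ : 0 ≤ β₂) (hβ : β₂ ≤ β₁) (hθ : 0 ≤ θ)
    {y : Fin 7 → ℝ} (hy : ∀ i, 0 ≤ y i) {Smax : ℝ} (hS : y 0 ≤ Smax) :
    0 ≤ covidIncidence b θ β₁ β₂ y ∧
      covidIncidence b θ β₁ β₂ y ≤ β₁ * Smax * (y 4 + θ * y 3) := by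
  have hfrac : 0 ≤ β₂ * y 4 / (b + y 4) ∧ β₂ * y 4 / (b + y 4) ≤ β₂ :=
    ⟨by have := hy 4; positivity,
      div_le_of_le_mul₀ (by linarith [hy 4]) hβ₂ (by nlinarith [hy 4])⟩
  have hW : 0 ≤ y 4 + θ * y 3 := by have := hy 3; have := hy 4; positivity
  constructor
  · exact mul_nonneg (mul_nonneg (by linarith) (hy 0)) hW
  · exact mul_le_mul_of_nonneg_right (mul_le_mul (by linarith) hS (hy 0) (by linarith)) hW

theorem covidF_lyapunov_le {y : Fin 7 → ℝ} (hy : ∀ i, 0 ≤ y i) {B a c ε : ℝ}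
    (hinc : covidIncidence b θ β₁ β₂ y ≤ B * (y 4 + θ * y 3))
    (hE : (1 - p) * σ * a + σ * p * c ≤ μ + σ - ε)
    (hA : B * θ ≤ (μ + εA + γA + dA - ε) * a) (hI : B ≤ (μ + εI + γI + dI - ε) * c) :
    𝓕 y 2 + a * 𝓕 y 3 + c * 𝓕 y 4 ≤ -ε * (y 2 + a * y 3 + c * y 4) := by
  simp only [covidIncidence] at hinc
  simp only [covidF, Matrix.cons_val]
  nlinarith [mul_le_mul_of_nonneg_right hE (hy 2), mul_le_mul_of_nonneg_right hA (hy 3),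
    mul_le_mul_of_nonneg_right hI (hy 4)]

theorem covidF_sum_le (hdA : 0 ≤ dA) (hdI : 0 ≤ dI) (hdH : 0 ≤ dH) {y : Fin 7 → ℝ}
    (hy : ∀ i, 0 ≤ y i) : ∑ i, 𝓕 y i ≤ -μ * ∑ i, y i + Λ := by
  simp only [Fin.sum_univ_seven, covidF, Matrix.cons_val]
  nlinarith [mul_nonneg hdA (hy 3), mul_nonneg hdI (hy 4), mul_nonneg hdH (hy 5)]

theorem covidF_zero_add_one (hμ : μ ≠ 0) (hμql : μ + q + lam ≠ 0) (y : Fin 7 → ℝ) :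
    𝓕 y 0 + 𝓕 y 1 = -covidIncidence b θ β₁ β₂ y - μ * (y 0 + y 1 - (S° + Q°)) := by
  simp only [covidF, covidIncidence, Matrix.cons_val]
  field_simp
  ring

theorem covidF_one (y : Fin 7 → ℝ) :
    𝓕 y 1 = q * (y 0 + y 1 - (S° + Q°)) - (μ + lam + q) * (y 1 - Q°) := by
  simp only [covidF, Matrix.cons_val]
  ring

theorem lyapunov_condition_of_R0_lt_one (hμσ : 0 < μ + σ)
    (hR0 : (θ * (1 - p) / (μ + dA + εA + γA) + p / (μ + dI + εI + γI)) *
      (σ * β₁ * S° / (μ + σ)) < 1) :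
    (1 - p) * σ * (β₁ * S° * θ) / (μ + εA + γA + dA) + σ * p * (β₁ * S°) / (μ + εI + γI + dI)
      < μ + σ := by
  rw [← div_lt_one hμσ]
  refine Eq.trans_lt ?_ hR0
  ring

theorem IsSolution.tendsto_infected_zero (hx : IsSolution 𝓕 x)
    (hnn : ∀ t ∈ Ici (0 : ℝ), ∀ i, 0 ≤ x t i) {B : ℝ} (hB : 0 < B) (hθ : 0 < θ)
    (hkA : 0 < μ + εA + γA + dA) (hkI : 0 < μ + εI + γI + dI)
    (hinc : ∀ t ∈ Ici (0 : ℝ), covidIncidence b θ β₁ β₂ (x t) ≤ B * (x t 4 + θ * x t 3))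
    (hR : (1 - p) * σ * (B * θ) / (μ + εA + γA + dA) + σ * p * B / (μ + εI + γI + dI) < μ + σ) :
    Tendsto (fun t => x t 2) atTop (𝓝 0) ∧ Tendsto (fun t => x t 3) atTop (𝓝 0) ∧
      Tendsto (fun t => x t 4) atTop (𝓝 0) := by
  obtain ⟨a, c, ε, ha, hc, hε, hE, hA, hI⟩ :=
    exists_pos_lyapunov_coeffs (mul_pos hB hθ) hB hkA hkI hR
  have hV : Tendsto (fun t => x t 2 + a * x t 3 + c * x t 4) atTop (𝓝 0) :=
    tendsto_zero_of_nonneg_of_hasDerivWithinAt_le hε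
      (fun t ht => ((hx.hasDerivWithinAt_apply 2 t ht).add
        ((hx.hasDerivWithinAt_apply 3 t ht).const_mul a)).add
          ((hx.hasDerivWithinAt_apply 4 t ht).const_mul c))
      (fun t ht => covidF_lyapunov_le (hnn t ht) (hinc t ht) hE hA hI)
      (fun t ht => by have := hnn t ht 2; have := hnn t ht 3; have := hnn t ht 4; positivity)
  have hpos : ∀ᶠ t in atTop, 0 ≤ x t 2 ∧ 0 ≤ a * x t 3 ∧ 0 ≤ c * x t 4 :=
    (eventually_ge_atTop 0).mono fun t ht =>
      ⟨hnn t ht 2, mul_nonneg ha.le (hnn t ht 3), mul_nonneg hc.le (hnn t ht 4)⟩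
  refine ⟨tendsto_zero_of_nonneg_of_mul_le one_pos ?_ hV,
    tendsto_zero_of_nonneg_of_mul_le ha ?_ hV, tendsto_zero_of_nonneg_of_mul_le hc ?_ hV⟩ <;>
  filter_upwards [eventually_ge_atTop 0, hpos] with t ht ⟨h2, h3, h4⟩ <;>
  exact ⟨hnn t ht _, by linarith⟩

theorem IsSolution.eventually_sum_lt (hx : IsSolution 𝓕 x)
    (hnn : ∀ t ∈ Ici (0 : ℝ), ∀ i, 0 ≤ x t i) (hμ : 0 < μ) (hdA : 0 ≤ dA) (hdI : 0 ≤ dI)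
    (hdH : 0 ≤ dH) :
    ∀ᶠ t in atTop, ∑ i, x t i < Λ / μ + 1 :=
  eventually_lt_of_hasDerivWithinAt_le (h := fun _ => Λ) hμ
    (fun t ht => HasDerivWithinAt.fun_sum fun i _ => hx.hasDerivWithinAt_apply i t ht)
    (fun t ht => covidF_sum_le hdA hdI hdH (hnn t ht)) tendsto_const_nhds (lt_add_one _)

theorem IsSolution.tendsto_incidence_zero (hx : IsSolution 𝓕 x)
    (hnn : ∀ t ∈ Ici (0 : ℝ), ∀ i, 0 ≤ x t i) (hμ : 0 < μ) (hb : 0 ≤ b) (hβ₂ : 0 ≤ β₂)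
    (hβ : β₂ ≤ β₁) (hθ : 0 ≤ θ) (hdA : 0 ≤ dA) (hdI : 0 ≤ dI) (hdH : 0 ≤ dH)
    (hA : Tendsto (fun t => x t 3) atTop (𝓝 0)) (hI : Tendsto (fun t => x t 4) atTop (𝓝 0)) :
    Tendsto (fun t => covidIncidence b θ β₁ β₂ (x t)) atTop (𝓝 0) := by
  have hbound : ∀ᶠ t in atTop, 0 ≤ covidIncidence b θ β₁ β₂ (x t) ∧
      covidIncidence b θ β₁ β₂ (x t) ≤ β₁ * (Λ / μ + 1) * (x t 4 + θ * x t 3) := by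
    filter_upwards [eventually_ge_atTop 0, hx.eventually_sum_lt hnn hμ hdA hdI hdH] with t ht hN
    refine covidIncidence_nonneg_le hb hβ₂ hβ hθ (hnn t ht) (hN.le.trans' ?_)
    exact Finset.single_le_sum (fun i _ => hnn t ht i) (Finset.mem_univ 0)
  exact tendsto_of_tendsto_of_tendsto_of_le_of_le' tendsto_const_nhds
    (by simpa using (hI.add (hA.const_mul θ)).const_mul (β₁ * (Λ / μ + 1)))
    (hbound.mono fun _ h => h.1) (hbound.mono fun _ h => h.2)

theorem IsSolution.tendsto_diseaseFreeEquilibrium (hx : IsSolution 𝓕 x) (hμ : 0 < μ)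
    (hq : 0 ≤ q) (hlam : 0 ≤ lam) (hkH : 0 < μ + dH + γH)
    (hE : Tendsto (fun t => x t 2) atTop (𝓝 0)) (hA : Tendsto (fun t => x t 3) atTop (𝓝 0))
    (hI : Tendsto (fun t => x t 4) atTop (𝓝 0))
    (hg : Tendsto (fun t => covidIncidence b θ β₁ β₂ (x t)) atTop (𝓝 0)) :
    Tendsto x atTop (𝓝 ![S°, Q°, 0, 0, 0, 0, 0]) := by
  have hSQ : Tendsto (fun t => x t 0 + x t 1 - (S° + Q°)) atTop (𝓝 0) := by
    refine tendsto_zero_of_hasDerivWithinAt_sub_mul hμ (fun t ht => ?_) (by simpa using hg.neg)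
    have := ((hx.hasDerivWithinAt_apply 0 t ht).add (hx.hasDerivWithinAt_apply 1 t ht)).sub_const
      (S° + Q°)
    rwa [covidF_zero_add_one hμ.ne' (by positivity)] at this
  have hQ : Tendsto (fun t => x t 1 - Q°) atTop (𝓝 0) := by
    refine tendsto_zero_of_hasDerivWithinAt_sub_mul (k := μ + lam + q) (by positivity)
      (fun t ht => ?_) (by simpa using hSQ.const_mul q)
    have := (hx.hasDerivWithinAt_apply 1 t ht).sub_const Q°
    rwa [covidF_one] at this
  have hH : Tendsto (fun t => x t 5) atTop (𝓝 0) :=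
    tendsto_zero_of_hasDerivWithinAt_sub_mul hkH (hx.hasDerivWithinAt_apply 5)
      (by simpa using (hI.const_mul εI).add (hA.const_mul εA))
  have hR : Tendsto (fun t => x t 6) atTop (𝓝 0) :=
    tendsto_zero_of_hasDerivWithinAt_sub_mul hμ (hx.hasDerivWithinAt_apply 6)
      (by simpa using ((hH.const_mul γH).add (hI.const_mul γI)).add (hA.const_mul γA))
  refine tendsto_pi_nhds.2 fun i => ?_
  fin_cases i
  · simpa using ((hSQ.sub hQ).add_const S°).congr fun t => by ring
  · simpa using hQ.add_const Q°
  exacts [hE, hA, hI, hH, hR]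

end Covid

theorem covid_DFE_global_stability_on_M_general
    (Λ b q lam μ σ εA γA dA εI γI dI γH dH θ p β₁ β₂ : ℝ)
    (hΛ : 0 < Λ) (hb : 0 < b) (hq : 0 < q) (hlam : 0 < lam) (hμ : 0 < μ)
    (hσ : 0 < σ) (hεA : 0 < εA) (hγA : 0 < γA) (hdA : 0 < dA)
    (hεI : 0 < εI) (hγI : 0 < γI) (hdI : 0 < dI) (hγH : 0 < γH) (hdH : 0 < dH)
    (hθ : θ ∈ Set.Ioo (0 : ℝ) 1)
    (hβ₂ : 0 < β₂) (hβ : β₂ ≤ β₁)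
    (hR0 : ((θ * (1 - p) / (μ + dA + εA + γA) + p / (μ + dI + εI + γI)) * (σ * β₁ * (Λ / μ * ((μ + lam) / (μ + q + lam))) / (μ + σ))) < 1)
    (M : Set (Fin 7 → ℝ))
    (hMsub : ∀ y ∈ M, ∀ i, 0 ≤ y i)
    (hMinv : ∀ x : ℝ → Fin 7 → ℝ, IsSolution (covidF Λ b q lam μ σ εA γA dA εI γI dI γH dH θ p β₁ β₂) x → x 0 ∈ M →
      ∀ t : ℝ, 0 ≤ t → x t ∈ M)
    (hfhat : ∀ y ∈ M,
      0 ≤ (β₁ * (Λ / μ * ((μ + lam) / (μ + q + lam))) - (β₁ - β₂ * y 4 / (b + y 4)) * y 0) * (y 4 + θ * y 3)) :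
    ∀ x : ℝ → Fin 7 → ℝ, IsSolution (covidF Λ b q lam μ σ εA γA dA εI γI dI γH dH θ p β₁ β₂) x → x 0 ∈ M →
      Filter.Tendsto (fun t => x t 2) Filter.atTop (nhds 0) ∧
      Filter.Tendsto (fun t => x t 3) Filter.atTop (nhds 0) ∧
      Filter.Tendsto (fun t => x t 4) Filter.atTop (nhds 0) ∧
      Filter.Tendsto x Filter.atTop (nhds (![Λ / μ * ((μ + lam) / (μ + q + lam)), Λ / μ * (q / (μ + q + lam)), 0, 0, 0, 0, 0])) := by
  intro x hx hx0
  have hmem : ∀ t ∈ Ici (0 : ℝ), x t ∈ M := hMinv x hx hx0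
  have hnn : ∀ t ∈ Ici (0 : ℝ), ∀ i, 0 ≤ x t i := fun t ht => hMsub _ (hmem t ht)
  have hβ₁ : 0 < β₁ := hβ₂.trans_le hβ
  obtain ⟨hE, hA, hI⟩ := hx.tendsto_infected_zero hnn (by positivity) hθ.1 (by positivity)
    (by positivity) (fun t ht => by unfold covidIncidence; linarith [hfhat _ (hmem t ht)])
    (lyapunov_condition_of_R0_lt_one (by positivity) hR0)
  have hg := hx.tendsto_incidence_zero hnn hμ hb.le hβ₂.le hβ hθ.1.le hdA.le hdI.le hdH.le hA hI
  exact ⟨hE, hA, hI, hx.tendsto_diseaseFreeEquilibrium hμ hq.le hlam.le (by positivity) hE hA hI hg⟩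

/-- if `R₀ < 1` and `M` is a positively invariant subset of the nonnegative
orthant on which `f̂ ≥ 0`, then every solution starting in `M` has vanishing infected
components and converges to the disease-free equilibrium `ℰ°`. -/
theorem covid_DFE_global_stability_on_M
    (Λ b q lam μ σ εA γA dA εI γI dI γH dH θ p β₁ β₂ : ℝ)
    (hΛ : 0 < Λ) (hb : 0 < b) (hq : 0 < q) (hlam : 0 < lam) (hμ : 0 < μ)
    (hσ : 0 < σ) (hεA : 0 < εA) (hγA : 0 < γA) (hdA : 0 < dA)
    (hεI : 0 < εI) (hγI : 0 < γI) (hdI : 0 < dI) (hγH : 0 < γH) (hdH : 0 < dH)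
    (hθ : θ ∈ Set.Ioo (0 : ℝ) 1) (hp : p ∈ Set.Ioo (0 : ℝ) 1)
    (hβ₂ : 0 < β₂) (hβ : β₂ ≤ β₁)
    (hR0 : ((θ * (1 - p) / (μ + dA + εA + γA) + p / (μ + dI + εI + γI)) * (σ * β₁ * (Λ / μ * ((μ + lam) / (μ + q + lam))) / (μ + σ))) < 1)
    (M : Set (Fin 7 → ℝ))
    (hMsub : ∀ y ∈ M, ∀ i, 0 ≤ y i)
    (hMinv : ∀ x : ℝ → Fin 7 → ℝ, IsSolution (covidF Λ b q lam μ σ εA γA dA εI γI dI γH dH θ p β₁ β₂) x → x 0 ∈ M →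
      ∀ t : ℝ, 0 ≤ t → x t ∈ M)
    (hfhat : ∀ y ∈ M,
      0 ≤ (β₁ * (Λ / μ * ((μ + lam) / (μ + q + lam))) - (β₁ - β₂ * y 4 / (b + y 4)) * y 0) * (y 4 + θ * y 3)) :
    ∀ x : ℝ → Fin 7 → ℝ, IsSolution (covidF Λ b q lam μ σ εA γA dA εI γI dI γH dH θ p β₁ β₂) x → x 0 ∈ M →
      Filter.Tendsto (fun t => x t 2) Filter.atTop (nhds 0) ∧
      Filter.Tendsto (fun t => x t 3) Filter.atTop (nhds 0) ∧
      Filter.Tendsto (fun t => x t 4) Filter.atTop (nhds 0) ∧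
      Filter.Tendsto x Filter.atTop (nhds (![Λ / μ * ((μ + lam) / (μ + q + lam)), Λ / μ * (q / (μ + q + lam)), 0, 0, 0, 0, 0])) :=
  covid_DFE_global_stability_on_M_general Λ b q lam μ σ εA γA dA εI γI dI γH dH θ p β₁ β₂ hΛ hb hq
    hlam hμ hσ hεA hγA hdA hεI hγI hdI hγH hdH hθ hβ₂ hβ hR0 M hMsub hMinv hfhat
end

section
/- If R₀ > 1, then there exists exactly one point x in the open positive orthant (0,∞)⁷ with F(x) = 0 (a unique endemic equilibrium of the COVID-19 system); if R₀ ≤ 1, then there is no point x ∈ (0,∞)⁷ with F(x) = 0. -/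
/-!
At an equilibrium the `Q`, `A`, `I`, `H`, `R` equations are linear, and adding the `S` and `E`
equations cancels the incidence term, so every compartment is an explicit affine function of the
exposed class `E`, with `S(E) > 0` exactly for `E < Λ / (μ + σ)`. Dividing the `E` equation by
`E > 0` leaves `ℛ(E) = 1`, where `ℛ(E) = β(I(E)) S(E) (I(E) + θ A(E)) / ((μ + σ) E)` is an
effective reproduction number with `ℛ(0) = R₀`. Both the saturated incidence `β` and `S` decrease
in `E`, so `ℛ` falls strictly from `R₀` to `0` on `[0, Λ / (μ + σ)]`: it takes the value `1`
exactly once when `R₀ > 1` and never when `R₀ ≤ 1`.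
-/

open Set

theorem existsUnique_mem_Ioo_of_strictAntiOn {α δ : Type*} [ConditionallyCompleteLinearOrder α]
    [TopologicalSpace α] [OrderTopology α] [DenselyOrdered α] [LinearOrder δ] [TopologicalSpace δ]
    [OrderClosedTopology δ] {f : α → δ} {a b : α} {c : δ} (hab : a ≤ b)
    (hcont : ContinuousOn f (Icc a b)) (hanti : StrictAntiOn f (Icc a b))
    (hb : f b < c) (ha : c < f a) : ∃! x, x ∈ Ioo a b ∧ f x = c := by
  obtain ⟨x, hx, hfx⟩ := intermediate_value_Ioo' hab hcont ⟨hb, ha⟩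
  exact ⟨x, ⟨hx, hfx⟩, fun y ⟨hy, hfy⟩ =>
    hanti.injOn (Ioo_subset_Icc_self hy) (Ioo_subset_Icc_self hx) (hfy.trans hfx.symm)⟩

noncomputable def saturatedIncidence (β₁ β₂ b I : ℝ) : ℝ := β₁ - β₂ * I / (b + I)

section SaturatedIncidence

variable {β₁ β₂ b κ k c Λ : ℝ}

theorem saturatedIncidence_pos (hb : 0 < b) (hβ₂ : 0 < β₂) (hβ : β₂ ≤ β₁) {I : ℝ} (hI : 0 ≤ I) :
    0 < saturatedIncidence β₁ β₂ b I := by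
  have : β₂ * I / (b + I) < β₂ := by
    rw [div_lt_iff₀ (by positivity)]; nlinarith
  unfold saturatedIncidence; linarith

theorem strictAntiOn_saturatedIncidence (hb : 0 < b) (hβ₂ : 0 < β₂) :
    StrictAntiOn (saturatedIncidence β₁ β₂ b) (Ici 0) := by
  rintro I (hI : 0 ≤ I) J (hJ : 0 ≤ J) hIJ
  unfold saturatedIncidence
  have : β₂ * I / (b + I) < β₂ * J / (b + J) := by
    rw [div_lt_div_iff₀ (by positivity) (by positivity)]
    nlinarith [mul_pos (mul_pos hβ₂ hb) (sub_pos.mpr hIJ)]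
  linarith

theorem continuousOn_saturatedIncidence (hb : 0 < b) :
    ContinuousOn (saturatedIncidence β₁ β₂ b) (Ici 0) := by
  unfold saturatedIncidence
  exact continuousOn_const.sub ((continuousOn_const.mul continuousOn_id).div
    (continuousOn_const.add continuousOn_id) fun I (hI : 0 ≤ I) => by positivity)

theorem strictAntiOn_saturatedIncidence_mul_sub (hb : 0 < b) (hβ₂ : 0 < β₂) (hβ : β₂ ≤ β₁)
    (hκ : 0 < κ) (hk : 0 < k) (hc : 0 < c) :
    StrictAntiOn (fun E => saturatedIncidence β₁ β₂ b (κ * E) * (Λ - k * E) * c)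
      (Icc 0 (Λ / k)) := by
  intro E hE F hF hEF
  have hκE : 0 ≤ κ * E := mul_nonneg hκ.le hE.1
  have hκF : 0 ≤ κ * F := mul_nonneg hκ.le hF.1
  have hsat : saturatedIncidence β₁ β₂ b (κ * F) < saturatedIncidence β₁ β₂ b (κ * E) :=
    strictAntiOn_saturatedIncidence hb hβ₂ hκE hκF (by gcongr)
  have hF' : 0 ≤ Λ - k * F := sub_nonneg.2 ((le_div_iff₀' hk).1 hF.2)
  have hlin : Λ - k * F < Λ - k * E := by gcongr
  refine mul_lt_mul_of_pos_right ?_ hc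
  calc saturatedIncidence β₁ β₂ b (κ * F) * (Λ - k * F)
      ≤ saturatedIncidence β₁ β₂ b (κ * E) * (Λ - k * F) := by gcongr
    _ < saturatedIncidence β₁ β₂ b (κ * E) * (Λ - k * E) := by
      gcongr; exact saturatedIncidence_pos hb hβ₂ hβ hκE

theorem continuousOn_saturatedIncidence_mul_sub (hb : 0 < b) (hκ : 0 < κ) :
    ContinuousOn (fun E => saturatedIncidence β₁ β₂ b (κ * E) * (Λ - k * E) * c) (Ici 0) :=
  (((continuousOn_saturatedIncidence hb).comp (continuousOn_const.mul continuousOn_id)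
    fun E (hE : 0 ≤ E) => show 0 ≤ κ * E by positivity).mul (by fun_prop)).mul continuousOn_const

end SaturatedIncidence

section Model

variable (Λ b q lam μ σ εA γA dA εI γI dI γH dH θ p β₁ β₂ : ℝ)

noncomputable def equilibriumProfile (E : ℝ) : Fin 7 → ℝ :=
  let S := (Λ - (μ + σ) * E) * (μ + lam) / (μ * (μ + q + lam))
  let A := (1 - p) * σ * E / (μ + εA + γA + dA)
  let I := σ * p / (μ + εI + γI + dI) * E
  let H := (εI * I + εA * A) / (μ + dH + γH)
  ![S, q * S / (μ + lam), E, A, I, H, (γH * H + γI * I + γA * A) / μ]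

noncomputable def effectiveReproductionNumber (E : ℝ) : ℝ :=
  saturatedIncidence β₁ β₂ b (σ * p / (μ + εI + γI + dI) * E) * (Λ - (μ + σ) * E) *
    ((θ * (1 - p) / (μ + εA + γA + dA) + p / (μ + εI + γI + dI)) * σ / (μ + σ) *
      ((μ + lam) / (μ + q + lam)) / μ)

local notation "ℱ" => covidF Λ b q lam μ σ εA γA dA εI γI dI γH dH θ p β₁ β₂
local notation "𝐱" => equilibriumProfile Λ q lam μ σ εA γA dA εI γI dI γH dH p
local notation "ℛ" => effectiveReproductionNumber Λ b q lam μ σ εA γA dA εI γI dI θ p β₁ β₂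

variable {Λ b q lam μ σ εA γA dA εI γI dI γH dH θ p β₁ β₂}

theorem covidF_equilibriumProfile (hμ : μ ≠ 0) (hμlam : μ + lam ≠ 0) (hμqlam : μ + q + lam ≠ 0)
    (hμσ : μ + σ ≠ 0) (hA : μ + εA + γA + dA ≠ 0) (hI : μ + εI + γI + dI ≠ 0)
    (hH : μ + dH + γH ≠ 0) (E : ℝ) :
    ℱ (𝐱 E) = ![-((μ + σ) * E * (ℛ E - 1)), 0, (μ + σ) * E * (ℛ E - 1), 0, 0, 0, 0] := by
  ext i
  fin_cases i <;>
    simp only [covidF, equilibriumProfile, effectiveReproductionNumber, saturatedIncidence,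
      Fin.zero_eta, Fin.mk_one, Fin.reduceFinMk, Fin.isValue, Nat.succ_eq_add_one, Nat.reduceAdd,
      Matrix.cons_val_zero, Matrix.cons_val_one, Matrix.cons_val] <;>
    field_simp <;>
    ring

theorem eq_equilibriumProfile_of_covidF_eq_zero (hμ : μ ≠ 0) (hμlam : μ + lam ≠ 0)
    (hμqlam : μ + q + lam ≠ 0) (hA : μ + εA + γA + dA ≠ 0) (hI : μ + εI + γI + dI ≠ 0)
    (hH : μ + dH + γH ≠ 0) {x : Fin 7 → ℝ} (hx : ℱ x = 0) : x = 𝐱 (x 2) := by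
  have h0 : Λ - (β₁ - β₂ * x 4 / (b + x 4)) * x 0 * (x 4 + θ * x 3) + lam * x 1
      - (μ + q) * x 0 = 0 := congrFun hx 0
  have h1 : q * x 0 - (μ + lam) * x 1 = 0 := congrFun hx 1
  have h2 : (β₁ - β₂ * x 4 / (b + x 4)) * x 0 * (x 4 + θ * x 3) - (μ + σ) * x 2 = 0 :=
    congrFun hx 2
  have h3 : (1 - p) * σ * x 2 - (μ + εA + γA + dA) * x 3 = 0 := congrFun hx 3
  have h4 : σ * p * x 2 - (μ + εI + γI + dI) * x 4 = 0 := congrFun hx 4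
  have h5 : εI * x 4 + εA * x 3 - (μ + dH + γH) * x 5 = 0 := congrFun hx 5
  have h6 : γH * x 5 + γI * x 4 + γA * x 3 - μ * x 6 = 0 := congrFun hx 6
  have hS : x 0 = (Λ - (μ + σ) * x 2) * (μ + lam) / (μ * (μ + q + lam)) := by
    rw [eq_div_iff (mul_ne_zero hμ hμqlam)]
    linear_combination -(μ + lam) * (h0 + h2) - lam * h1
  have hQ : x 1 = q * x 0 / (μ + lam) := by
    rw [eq_div_iff hμlam]; linear_combination -h1
  have hA' : x 3 = (1 - p) * σ * x 2 / (μ + εA + γA + dA) := by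
    rw [eq_div_iff hA]; linear_combination -h3
  have hI' : x 4 = σ * p / (μ + εI + γI + dI) * x 2 := by
    rw [div_mul_eq_mul_div, eq_div_iff hI]; linear_combination -h4
  have hH' : x 5 = (εI * x 4 + εA * x 3) / (μ + dH + γH) := by
    rw [eq_div_iff hH]; linear_combination -h5
  have hR : x 6 = (γH * x 5 + γI * x 4 + γA * x 3) / μ := by
    rw [eq_div_iff hμ]; linear_combination -h6
  ext i
  fin_cases i
  · exact hS
  · exact hQ.trans (congrArg (q * · / (μ + lam)) hS)
  · rfl
  · exact hA'
  · exact hI'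
  · exact hH'.trans (by rw [hI', hA']; rfl)
  · exact hR.trans (by rw [hH', hI', hA']; rfl)

theorem equilibriumProfile_pos (hμ : 0 < μ) (hq : 0 < q) (hlam : 0 < lam) (hσ : 0 < σ)
    (hεA : 0 < εA) (hγA : 0 < γA) (hdA : 0 < dA) (hεI : 0 < εI) (hγI : 0 < γI) (hdI : 0 < dI)
    (hγH : 0 < γH) (hdH : 0 < dH) (hp : p ∈ Ioo 0 1) {E : ℝ} (hE : 0 < E)
    (hEΛ : (μ + σ) * E < Λ) (i : Fin 7) : 0 < 𝐱 E i := by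
  have hp0 : 0 < p := hp.1
  generalize hS : Λ - (μ + σ) * E = S
  generalize hp' : 1 - p = p'
  have : 0 < S := hS ▸ sub_pos.2 hEΛ
  have : 0 < p' := hp' ▸ sub_pos.2 hp.2
  fin_cases i <;>
    simp only [equilibriumProfile, hS, hp', Fin.zero_eta, Fin.mk_one, Fin.reduceFinMk, Fin.isValue,
      Matrix.cons_val_zero, Matrix.cons_val_one, Matrix.cons_val] <;>
    positivity

theorem forall_pos_and_covidF_eq_zero_iff (hμ : 0 < μ) (hq : 0 < q) (hlam : 0 < lam) (hσ : 0 < σ)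
    (hεA : 0 < εA) (hγA : 0 < γA) (hdA : 0 < dA) (hεI : 0 < εI) (hγI : 0 < γI) (hdI : 0 < dI)
    (hγH : 0 < γH) (hdH : 0 < dH) (hp : p ∈ Ioo 0 1) (x : Fin 7 → ℝ) :
    ((∀ i, 0 < x i) ∧ ℱ x = 0) ↔ ∃ E ∈ Ioo 0 (Λ / (μ + σ)), ℛ E = 1 ∧ x = 𝐱 E := by
  have hμσ : 0 < μ + σ := by positivity
  constructor
  · rintro ⟨hpos, hx⟩
    have hx_eq := eq_equilibriumProfile_of_covidF_eq_zero hμ.ne' (by positivity) (by positivity)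
      (by positivity) (by positivity) (by positivity) hx
    have hS : 0 < Λ - (μ + σ) * x 2 := by
      have h0 : 0 < (Λ - (μ + σ) * x 2) * (μ + lam) / (μ * (μ + q + lam)) := by
        rw [hx_eq] at hpos; exact hpos 0
      exact pos_of_mul_pos_left ((div_pos_iff_of_pos_right (by positivity)).1 h0) (by positivity)
    rw [hx_eq, covidF_equilibriumProfile hμ.ne' (by positivity) (by positivity) hμσ.ne'
      (by positivity) (by positivity) (by positivity)] at hx
    have hR : (μ + σ) * x 2 * (ℛ (x 2) - 1) = 0 := congrFun hx 2
    refine ⟨x 2, ⟨hpos 2, by rwa [lt_div_iff₀' hμσ, ← sub_pos]⟩, ?_, hx_eq⟩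
    simpa [hμσ.ne', (hpos 2).ne', sub_eq_zero] using hR
  · rintro ⟨E, ⟨hE, hEΛ⟩, hR, rfl⟩
    refine ⟨equilibriumProfile_pos hμ hq hlam hσ hεA hγA hdA hεI hγI hdI hγH hdH hp hE
      ((lt_div_iff₀' hμσ).1 hEΛ), ?_⟩
    rw [covidF_equilibriumProfile hμ.ne' (by positivity) (by positivity) hμσ.ne'
      (by positivity) (by positivity) (by positivity), hR]
    simp

theorem continuousOn_effectiveReproductionNumber (hb : 0 < b) (hμ : 0 < μ) (hσ : 0 < σ)
    (hεI : 0 < εI) (hγI : 0 < γI) (hdI : 0 < dI) (hp : 0 < p) : ContinuousOn ℛ (Ici 0) :=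
  continuousOn_saturatedIncidence_mul_sub hb (by positivity)

theorem strictAntiOn_effectiveReproductionNumber (hb : 0 < b) (hβ₂ : 0 < β₂) (hβ : β₂ ≤ β₁)
    (hμ : 0 < μ) (hq : 0 < q) (hlam : 0 < lam) (hσ : 0 < σ) (hεA : 0 < εA) (hγA : 0 < γA)
    (hdA : 0 < dA) (hεI : 0 < εI) (hγI : 0 < γI) (hdI : 0 < dI) (hθ : 0 < θ) (hp : p ∈ Ioo 0 1) :
    StrictAntiOn ℛ (Icc 0 (Λ / (μ + σ))) := by
  have hinfectivity : 0 < θ * (1 - p) / (μ + εA + γA + dA) + p / (μ + εI + γI + dI) :=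
    add_pos (div_pos (mul_pos hθ (sub_pos.2 hp.2)) (by positivity)) (div_pos hp.1 (by positivity))
  exact strictAntiOn_saturatedIncidence_mul_sub hb hβ₂ hβ (div_pos (mul_pos hσ hp.1) (by positivity))
    (by positivity) (div_pos (mul_pos (div_pos (mul_pos hinfectivity hσ) (by positivity))
      (by positivity)) hμ)

theorem effectiveReproductionNumber_zero :
    ℛ 0 = (θ * (1 - p) / (μ + dA + εA + γA) + p / (μ + dI + εI + γI)) *
      (σ * β₁ * (Λ / μ * ((μ + lam) / (μ + q + lam))) / (μ + σ)) := by
  rw [show μ + dA + εA + γA = μ + εA + γA + dA by ring,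
    show μ + dI + εI + γI = μ + εI + γI + dI by ring]
  simp only [effectiveReproductionNumber, saturatedIncidence, mul_zero, zero_div, sub_zero]
  ring

theorem effectiveReproductionNumber_div_eq_zero (hμσ : μ + σ ≠ 0) : ℛ (Λ / (μ + σ)) = 0 := by
  simp [effectiveReproductionNumber, mul_div_cancel₀ Λ hμσ]

end Model

theorem covid_endemic_equilibrium_general
    (Λ b q lam μ σ εA γA dA εI γI dI γH dH θ p β₁ β₂ : ℝ)
    (hΛ : 0 < Λ) (hb : 0 < b) (hq : 0 < q) (hlam : 0 < lam) (hμ : 0 < μ)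
    (hσ : 0 < σ) (hεA : 0 < εA) (hγA : 0 < γA) (hdA : 0 < dA)
    (hεI : 0 < εI) (hγI : 0 < γI) (hdI : 0 < dI) (hγH : 0 < γH) (hdH : 0 < dH)
    (hθ : θ ∈ Set.Ioo (0 : ℝ) 1) (hp : p ∈ Set.Ioo (0 : ℝ) 1)
    (hβ₂ : 0 < β₂) (hβ : β₂ ≤ β₁) :
    (1 < ((θ * (1 - p) / (μ + dA + εA + γA) + p / (μ + dI + εI + γI)) * (σ * β₁ * (Λ / μ * ((μ + lam) / (μ + q + lam))) / (μ + σ))) →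
      ∃! x : Fin 7 → ℝ, (∀ i, 0 < x i) ∧ (covidF Λ b q lam μ σ εA γA dA εI γI dI γH dH θ p β₁ β₂) x = 0) ∧
    (((θ * (1 - p) / (μ + dA + εA + γA) + p / (μ + dI + εI + γI)) * (σ * β₁ * (Λ / μ * ((μ + lam) / (μ + q + lam))) / (μ + σ))) ≤ 1 →
      ¬ ∃ x : Fin 7 → ℝ, (∀ i, 0 < x i) ∧ (covidF Λ b q lam μ σ εA γA dA εI γI dI γH dH θ p β₁ β₂) x = 0) := by
  have hμσ : 0 < μ + σ := by positivity
  have hiff := forall_pos_and_covidF_eq_zero_iff (Λ := Λ) (b := b) (θ := θ) (β₁ := β₁) (β₂ := β₂)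
    hμ hq hlam hσ hεA hγA hdA hεI hγI hdI hγH hdH hp
  have hanti := strictAntiOn_effectiveReproductionNumber (Λ := Λ) hb hβ₂ hβ hμ hq hlam hσ hεA hγA
    hdA hεI hγI hdI hθ.1 hp
  rw [← effectiveReproductionNumber_zero (b := b) (β₂ := β₂)]
  refine ⟨fun hR₀ => ?_, fun hR₀ ⟨x, hx⟩ => ?_⟩
  · obtain ⟨E, hE, huniq⟩ := existsUnique_mem_Ioo_of_strictAntiOn (by positivity)
      ((continuousOn_effectiveReproductionNumber hb hμ hσ hεI hγI hdI hp.1).mono Icc_subset_Ici_self)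
      hanti (by rw [effectiveReproductionNumber_div_eq_zero hμσ.ne']; exact one_pos) hR₀
    refine ⟨_, (hiff _).2 ⟨E, hE.1, hE.2, rfl⟩, fun y hy => ?_⟩
    obtain ⟨E', hE', hRE', rfl⟩ := (hiff y).1 hy
    rw [huniq E' ⟨hE', hRE'⟩]
  · obtain ⟨E, hE, hRE, -⟩ := (hiff x).1 hx
    have := hanti (left_mem_Icc.2 (by positivity)) (Ioo_subset_Icc_self hE) hE.1
    linarith

/-- existence/uniqueness of the endemic equilibrium: if `R₀ > 1` there is a
unique zero of `F` in the open positive orthant; if `R₀ ≤ 1` there is none. -/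
theorem covid_endemic_equilibrium
    (Λ b q lam μ σ εA γA dA εI γI dI γH dH θ p β₁ β₂ : ℝ)
    (hΛ : 0 < Λ) (hb : 0 < b) (hq : 0 < q) (hlam : 0 < lam) (hμ : 0 < μ)
    (hσ : 0 < σ) (hεA : 0 < εA) (hγA : 0 < γA) (hdA : 0 < dA)
    (hεI : 0 < εI) (hγI : 0 < γI) (hdI : 0 < dI) (hγH : 0 < γH) (hdH : 0 < dH)
    (hθ : θ ∈ Set.Ioo (0 : ℝ) 1) (hp : p ∈ Set.Ioo (0 : ℝ) 1)
    (hβ₂ : 0 < β₂) (hβ : β₂ ≤ β₁) (hβlt : β₂ < β₁) :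
    (1 < ((θ * (1 - p) / (μ + dA + εA + γA) + p / (μ + dI + εI + γI)) * (σ * β₁ * (Λ / μ * ((μ + lam) / (μ + q + lam))) / (μ + σ))) →
      ∃! x : Fin 7 → ℝ, (∀ i, 0 < x i) ∧ (covidF Λ b q lam μ σ εA γA dA εI γI dI γH dH θ p β₁ β₂) x = 0) ∧
    (((θ * (1 - p) / (μ + dA + εA + γA) + p / (μ + dI + εI + γI)) * (σ * β₁ * (Λ / μ * ((μ + lam) / (μ + q + lam))) / (μ + σ))) ≤ 1 →
      ¬ ∃ x : Fin 7 → ℝ, (∀ i, 0 < x i) ∧ (covidF Λ b q lam μ σ εA γA dA εI γI dI γH dH θ p β₁ β₂) x = 0) :=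
  covid_endemic_equilibrium_general Λ b q lam μ σ εA γA dA εI γI dI γH dH θ p β₁ β₂ hΛ hb hq hlam hμ
    hσ hεA hγA hdA hεI hγI hdI hγH hdH hθ hp hβ₂ hβ
end
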